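/- arXiv:1111.5873 — 11 statements merged into one kernel-verified Lean document; each statement's English description precedes it below -/
import Mathlib

section
/- Let D be a nonzero complex number, and let λ, t be nonnegative reals. Suppose there exist nonzero complex numbers e, f with E = D·e/conj(e) ≠ conj(D) satisfying ((|f|²/e) − 1)(conj(D)·conj(e) − D·e)² = (λ·conj(f) − t·f)(λ·conj(E)·conj(e)·f − t·E·e·conj(f)) (with E = De/conj(e)). Then t = λ if and only if E = D. -/
/-!
Put `w = D e`, so that `E = w / ē` and `E ≠ D̄` says `w ∉ ℝ`. Multiplying the relation by `e ē`
makes it polynomial, and subtracting its complex conjugate leaves, after cancelling `|f|²`,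
`(ē - e)(w̄ - w)² = (λ² - t²)(w̄ ē² - w e²)`.
If `t = λ` this forces `ē = e`, i.e. `E = D`. Conversely `E = D` means `ē = e`, and then the right
side is `(λ² - t²) e² (w̄ - w)` while the left side vanishes, so `λ² = t²`.
-/

open ComplexConjugate

section

variable {e w f : ℂ} {lam t : ℝ}

theorem conj_sub_mul_sq_eq_of_relation (he : e ≠ 0) (hf : f ≠ 0)
    (heq : ((Complex.normSq f : ℂ) / e - 1) * (conj w - w) ^ 2 =
      ((lam : ℂ) * conj f - (t : ℂ) * f) *
        ((lam : ℂ) * conj (w / conj e) * conj e * f - (t : ℂ) * (w / conj e) * e * conj f)) :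
    (conj e - e) * (conj w - w) ^ 2 =
      ((lam : ℂ) ^ 2 - (t : ℂ) ^ 2) * (conj w * conj e ^ 2 - w * e ^ 2) := by
  have hce : conj e ≠ 0 := (map_ne_zero _).2 he
  have hpoly : conj e * (f * conj f - e) * (conj w - w) ^ 2 =
      ((lam : ℂ) * conj f - (t : ℂ) * f) *
        ((lam : ℂ) * conj w * conj e ^ 2 * f - (t : ℂ) * w * e ^ 2 * conj f) := by
    rw [← Complex.mul_conj] at heq
    simp only [map_div₀, Complex.conj_conj] at heq
    field_simp at heq
    linear_combination heq
  have hconj := congrArg conj hpoly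
  simp only [map_mul, map_sub, map_pow, Complex.conj_conj, Complex.conj_ofReal] at hconj
  have hff : f * conj f ≠ 0 := mul_ne_zero hf ((map_ne_zero _).2 hf)
  refine sub_eq_zero.1 ((mul_eq_zero.1 ?_).resolve_left hff)
  linear_combination hpoly - hconj

end

theorem conj_ne_self_of_div_conj_ne_conj {D e : ℂ} (he : e ≠ 0) (h : D * e / conj e ≠ conj D) :
    conj (D * e) ≠ D * e := by
  rw [ne_eq, div_eq_iff ((map_ne_zero _).2 he), ← map_mul] at h
  exact fun h' => h h'.symm

theorem mul_div_conj_eq_self_iff {D e : ℂ} (hD : D ≠ 0) (he : e ≠ 0) :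
    D * e / conj e = D ↔ conj e = e := by
  rw [div_eq_iff ((map_ne_zero _).2 he), mul_right_inj' hD, eq_comm]

/-- Corollary 2.7: among equivalent non-abelian nilpotent complex structures
`(1,λ,D) ~ (1,t,E)` with `E ≠ conj D`, equality of the `λ`-parameters is
equivalent to equality of the `D`-parameters. -/
theorem stmt1 (D : ℂ) (hD0 : D ≠ 0) (lam t : ℝ) (hlam : 0 ≤ lam) (ht : 0 ≤ t)
    (e f : ℂ) (he : e ≠ 0) (hf : f ≠ 0)
    (E : ℂ) (hE : E = D * e / (starRingEnd ℂ) e) (hEne : E ≠ (starRingEnd ℂ) D)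
    (heq : ((Complex.normSq f : ℂ) / e - 1) *
        ((starRingEnd ℂ) D * (starRingEnd ℂ) e - D * e) ^ 2 =
      ((lam : ℂ) * (starRingEnd ℂ) f - (t : ℂ) * f) *
        ((lam : ℂ) * (starRingEnd ℂ) E * (starRingEnd ℂ) e * f -
          (t : ℂ) * E * e * (starRingEnd ℂ) f)) :
    t = lam ↔ E = D := by
  subst hE
  have hw : conj (D * e) - D * e ≠ 0 := sub_ne_zero.2 (conj_ne_self_of_div_conj_ne_conj he hEne)
  rw [← map_mul] at heq
  have key := conj_sub_mul_sq_eq_of_relation he hf heq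
  rw [mul_div_conj_eq_self_iff hD0 he]
  constructor
  · rintro rfl
    have h0 : (conj e - e) * (conj (D * e) - D * e) ^ 2 = 0 := by rw [key]; ring
    exact sub_eq_zero.1 ((mul_eq_zero.1 h0).resolve_right (pow_ne_zero 2 hw))
  · intro hee
    rw [hee] at key
    have h0 : ((lam : ℂ) ^ 2 - (t : ℂ) ^ 2) * (e ^ 2 * (conj (D * e) - D * e)) = 0 := by
      linear_combination -key
    have hsq : (t : ℂ) ^ 2 = (lam : ℂ) ^ 2 := by
      linear_combination -(mul_eq_zero.1 h0).resolve_right (mul_ne_zero (pow_ne_zero 2 he) hw)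
    exact (sq_eq_sq₀ ht hlam).1 (by exact_mod_cast hsq)
end

section
/- Let g be a 6-dimensional nilpotent Lie algebra over ℝ with a complex structure J whose (1,0)-forms admit a basis ω¹,ω²,ω³ with dω¹ = 0, dω² = ω¹∧conj(ω¹), dω³ = ρ·ω¹∧ω² + B·ω¹∧conj(ω²) + C·ω²∧conj(ω¹), where ρ ∈ {0,1}, B,C ∈ ℂ, (ρ,B,C) ≠ (0,0,0). Then g is 2-step nilpotent if and only if B = ρ = 1 and C = 0. -/
/-!
Since `ω¹` kills brackets and `ω²` of a bracket is purely imaginary, the structure equations give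
`ω²⁅Z, ⁅X, Y⁆⁆ = 0` and `ω³⁅Z, ⁅X, Y⁆⁆ = ((B - ρ) ω¹(Z) + C ω̄¹(Z)) ω²⁅X, Y⁆`.
As `ω¹` is onto `ℂ` and `ω²` of some bracket is nonzero, all double brackets vanish iff
`B = ρ` and `C = 0`; the normalisation `(ρ, B, C) ≠ 0` then forces `ρ = 1`.
-/

namespace LieModule

variable {R L M : Type*} [CommRing R] [LieRing L] [LieAlgebra R L]
  [AddCommGroup M] [Module R M] [LieRingModule L M]

variable (R L M) in
theorem lowerCentralSeries_one_eq_bot_iff :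
    lowerCentralSeries R L M 1 = ⊥ ↔ ∀ (x : L) (m : M), ⁅x, m⁆ = 0 :=
  (trivial_iff_lower_central_eq_bot R L M).symm.trans ⟨fun h ↦ h.trivial, fun h ↦ ⟨h⟩⟩

variable (R L M) in
theorem lowerCentralSeries_two_eq_bot_iff [LieModule R L M] :
    lowerCentralSeries R L M 2 = ⊥ ↔ ∀ (x y : L) (m : M), ⁅x, ⁅y, m⁆⁆ = 0 := by
  rw [lowerCentralSeries_succ, ← le_max_triv_iff_bracket_eq_bot, lowerCentralSeries_succ,
    lowerCentralSeries_zero, LieSubmodule.lie_le_iff]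
  simp only [LieSubmodule.mem_top, true_imp_iff, mem_maxTrivSubmodule]
  exact ⟨fun h x y m ↦ h y m x, fun h y m x ↦ h x y m⟩

end LieModule

theorem Complex.eq_zero_of_forall_mul_add_mul_conj_eq_zero {a c : ℂ}
    (h : ∀ z : ℂ, a * z + c * (starRingEnd ℂ) z = 0) : a = 0 ∧ c = 0 := by
  have h1 := h 1
  have hI := h I
  simp only [map_one, mul_one, conj_I] at h1 hI
  have hac : a - c = 0 := by linear_combination -I * hI + (a - c) * I_sq
  exact ⟨by linear_combination (h1 + hac) / 2, by linear_combination (h1 - hac) / 2⟩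

namespace NilpotentComplexStructure

variable {g : Type*} [LieRing g] [LieAlgebra ℝ g] {ω₁ ω₂ ω₃ : g →ₗ[ℝ] ℂ} {ρ B C : ℂ}

theorem conj_omega₂_lie
    (hd2 : ∀ X Y : g, -ω₂ ⁅X, Y⁆ =
      ω₁ X * (starRingEnd ℂ) (ω₁ Y) - ω₁ Y * (starRingEnd ℂ) (ω₁ X)) (X Y : g) :
    (starRingEnd ℂ) (ω₂ ⁅X, Y⁆) = -ω₂ ⁅X, Y⁆ := by
  have h := hd2 X Y
  have h' := congrArg (starRingEnd ℂ) h
  simp only [map_neg, map_sub, map_mul, Complex.conj_conj] at h'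
  linear_combination -h' - h

theorem omega₂_lie_lie (hd1 : ∀ X Y : g, ω₁ ⁅X, Y⁆ = 0)
    (hd2 : ∀ X Y : g, -ω₂ ⁅X, Y⁆ =
      ω₁ X * (starRingEnd ℂ) (ω₁ Y) - ω₁ Y * (starRingEnd ℂ) (ω₁ X)) (X Y Z : g) :
    ω₂ ⁅Z, ⁅X, Y⁆⁆ = 0 := by
  have h := hd2 Z ⁅X, Y⁆
  rw [hd1 X Y, map_zero] at h
  linear_combination -h

theorem omega₃_lie_lie (hd1 : ∀ X Y : g, ω₁ ⁅X, Y⁆ = 0)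
    (hd2 : ∀ X Y : g, -ω₂ ⁅X, Y⁆ =
      ω₁ X * (starRingEnd ℂ) (ω₁ Y) - ω₁ Y * (starRingEnd ℂ) (ω₁ X))
    (hd3 : ∀ X Y : g, -ω₃ ⁅X, Y⁆ =
      ρ * (ω₁ X * ω₂ Y - ω₁ Y * ω₂ X)
        + B * (ω₁ X * (starRingEnd ℂ) (ω₂ Y) - ω₁ Y * (starRingEnd ℂ) (ω₂ X))
        + C * (ω₂ X * (starRingEnd ℂ) (ω₁ Y) - ω₂ Y * (starRingEnd ℂ) (ω₁ X))) (X Y Z : g) :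
    ω₃ ⁅Z, ⁅X, Y⁆⁆ = ((B - ρ) * ω₁ Z + C * (starRingEnd ℂ) (ω₁ Z)) * ω₂ ⁅X, Y⁆ := by
  have h := hd3 Z ⁅X, Y⁆
  rw [hd1 X Y, conj_omega₂_lie hd2 X Y, map_zero] at h
  linear_combination -h

theorem exists_omega₂_lie_ne_zero (hω₁ : Function.Surjective ω₁)
    (hd2 : ∀ X Y : g, -ω₂ ⁅X, Y⁆ =
      ω₁ X * (starRingEnd ℂ) (ω₁ Y) - ω₁ Y * (starRingEnd ℂ) (ω₁ X)) :
    ∃ X Y : g, ω₂ ⁅X, Y⁆ ≠ 0 := by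
  obtain ⟨X, hX⟩ := hω₁ 1
  obtain ⟨Y, hY⟩ := hω₁ Complex.I
  have h : ω₂ ⁅X, Y⁆ = 2 * Complex.I := by
    have h := hd2 X Y
    rw [hX, hY, map_one, Complex.conj_I] at h
    linear_combination -h
  exact ⟨X, Y, by rw [h]; exact mul_ne_zero two_ne_zero Complex.I_ne_zero⟩

theorem lie_lie_eq_zero_iff (hinj : Function.Injective (fun X : g => (ω₁ X, ω₂ X, ω₃ X)))
    (hω₁ : Function.Surjective ω₁)
    (hd1 : ∀ X Y : g, ω₁ ⁅X, Y⁆ = 0)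
    (hd2 : ∀ X Y : g, -ω₂ ⁅X, Y⁆ =
      ω₁ X * (starRingEnd ℂ) (ω₁ Y) - ω₁ Y * (starRingEnd ℂ) (ω₁ X))
    (hd3 : ∀ X Y : g, -ω₃ ⁅X, Y⁆ =
      ρ * (ω₁ X * ω₂ Y - ω₁ Y * ω₂ X)
        + B * (ω₁ X * (starRingEnd ℂ) (ω₂ Y) - ω₁ Y * (starRingEnd ℂ) (ω₂ X))
        + C * (ω₂ X * (starRingEnd ℂ) (ω₁ Y) - ω₂ Y * (starRingEnd ℂ) (ω₁ X))) :
    (∀ Z X Y : g, ⁅Z, ⁅X, Y⁆⁆ = 0) ↔ B = ρ ∧ C = 0 := by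
  constructor
  · intro hdb
    obtain ⟨X, Y, hXY⟩ := exists_omega₂_lie_ne_zero hω₁ hd2
    refine (Complex.eq_zero_of_forall_mul_add_mul_conj_eq_zero fun z ↦ ?_).imp
      sub_eq_zero.mp id
    obtain ⟨Z, rfl⟩ := hω₁ z
    have h := omega₃_lie_lie hd1 hd2 hd3 X Y Z
    rw [hdb, map_zero, eq_comm, mul_eq_zero] at h
    exact h.resolve_right hXY
  · rintro ⟨rfl, rfl⟩ Z X Y
    apply hinj
    simp only [map_zero, hd1, omega₂_lie_lie hd1 hd2, omega₃_lie_lie hd1 hd2 hd3, sub_self,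
      zero_mul, zero_add]

end NilpotentComplexStructure

/-- The structure equations are encoded via `dα(X,Y) = -α⁅X,Y⁆` and
`(α∧β)(X,Y) = α(X)β(Y) - α(Y)β(X)`. -/
theorem stmt4_general (g : Type) [LieRing g] [LieAlgebra ℝ g]
    (ω₁ ω₂ ω₃ : g →ₗ[ℝ] ℂ)
    (hcoord : Function.Bijective (fun X : g => (ω₁ X, ω₂ X, ω₃ X)))
    (ρ B C : ℂ) (hρ : ρ = 0 ∨ ρ = 1) (hnz : ¬(ρ = 0 ∧ B = 0 ∧ C = 0))
    (hd1 : ∀ X Y : g, ω₁ ⁅X, Y⁆ = 0)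
    (hd2 : ∀ X Y : g, -ω₂ ⁅X, Y⁆ =
      ω₁ X * (starRingEnd ℂ) (ω₁ Y) - ω₁ Y * (starRingEnd ℂ) (ω₁ X))
    (hd3 : ∀ X Y : g, -ω₃ ⁅X, Y⁆ =
      ρ * (ω₁ X * ω₂ Y - ω₁ Y * ω₂ X)
        + B * (ω₁ X * (starRingEnd ℂ) (ω₂ Y) - ω₁ Y * (starRingEnd ℂ) (ω₂ X))
        + C * (ω₂ X * (starRingEnd ℂ) (ω₁ Y) - ω₂ Y * (starRingEnd ℂ) (ω₁ X))) :
    (LieModule.lowerCentralSeries ℝ g g 2 = ⊥ ∧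
        LieModule.lowerCentralSeries ℝ g g 1 ≠ ⊥) ↔
      (B = 1 ∧ ρ = 1 ∧ C = 0) := by
  have hω₁ : Function.Surjective ω₁ := fun z ↦
    (hcoord.2 (z, 0, 0)).imp fun _ hX ↦ congrArg Prod.fst hX
  have hnonabelian : LieModule.lowerCentralSeries ℝ g g 1 ≠ ⊥ := by
    obtain ⟨X, Y, hXY⟩ := NilpotentComplexStructure.exists_omega₂_lie_ne_zero hω₁ hd2
    rw [Ne, LieModule.lowerCentralSeries_one_eq_bot_iff]
    exact fun h ↦ hXY (by rw [h, map_zero])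
  rw [LieModule.lowerCentralSeries_two_eq_bot_iff,
    NilpotentComplexStructure.lie_lie_eq_zero_iff hcoord.1 hω₁ hd1 hd2 hd3,
    and_iff_left hnonabelian]
  rcases hρ with rfl | rfl
  · exact iff_of_false (fun ⟨hB, hC⟩ ↦ hnz ⟨rfl, hB, hC⟩) (fun h ↦ zero_ne_one h.2.1)
  · exact ⟨fun ⟨hB, hC⟩ ↦ ⟨hB, rfl, hC⟩, fun ⟨hB, _, hC⟩ ↦ ⟨hB, hC⟩⟩

/-- Proposition 2.13 (first part): for the nilpotent complex structure with
`dω¹ = 0`, `dω² = ω¹∧ω̄¹`, `dω³ = ρ ω¹∧ω² + B ω¹∧ω̄² + C ω²∧ω̄¹`,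
`(ρ,B,C) ≠ (0,0,0)`, the underlying Lie algebra is 2-step nilpotent iff
`B = ρ = 1` and `C = 0`.  Here the structure equations are expressed via
`dα(X,Y) = -α⁅X,Y⁆` and the wedge `(α∧β)(X,Y) = α(X)β(Y) - α(Y)β(X)`. -/
theorem stmt4 (g : Type) [LieRing g] [LieAlgebra ℝ g]
    (J : g →ₗ[ℝ] g) (hJ : ∀ X, J (J X) = -X)
    (ω₁ ω₂ ω₃ : g →ₗ[ℝ] ℂ)
    (h1 : ∀ X, ω₁ (J X) = Complex.I * ω₁ X)
    (h2 : ∀ X, ω₂ (J X) = Complex.I * ω₂ X)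
    (h3 : ∀ X, ω₃ (J X) = Complex.I * ω₃ X)
    (hcoord : Function.Bijective (fun X : g => (ω₁ X, ω₂ X, ω₃ X)))
    (ρ B C : ℂ) (hρ : ρ = 0 ∨ ρ = 1) (hnz : ¬(ρ = 0 ∧ B = 0 ∧ C = 0))
    (hd1 : ∀ X Y : g, ω₁ ⁅X, Y⁆ = 0)
    (hd2 : ∀ X Y : g, -ω₂ ⁅X, Y⁆ =
      ω₁ X * (starRingEnd ℂ) (ω₁ Y) - ω₁ Y * (starRingEnd ℂ) (ω₁ X))
    (hd3 : ∀ X Y : g, -ω₃ ⁅X, Y⁆ =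
      ρ * (ω₁ X * ω₂ Y - ω₁ Y * ω₂ X)
        + B * (ω₁ X * (starRingEnd ℂ) (ω₂ Y) - ω₁ Y * (starRingEnd ℂ) (ω₂ X))
        + C * (ω₂ X * (starRingEnd ℂ) (ω₁ Y) - ω₂ Y * (starRingEnd ℂ) (ω₁ X))) :
    (LieModule.lowerCentralSeries ℝ g g 2 = ⊥ ∧
        LieModule.lowerCentralSeries ℝ g g 1 ≠ ⊥) ↔
      (B = 1 ∧ ρ = 1 ∧ C = 0) :=
  stmt4_general g ω₁ ω₂ ω₃ hcoord ρ B C hρ hnz hd1 hd2 hd3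
end

section
/- Let g be the 6-dimensional nilpotent Lie algebra determined by a (1,0)-basis ω¹,ω²,ω³ with dω¹ = 0, dω² = ω¹∧conj(ω¹), dω³ = ω¹∧ω² + B·ω¹∧conj(ω²) + c·ω²∧conj(ω¹), where B ∈ ℂ, c ≥ 0 real, and g is 3-step nilpotent. Then the center of g is 3-dimensional if and only if |B| = 1, B ≠ 1 and c = 0. -/
/-!
An element `m` is central iff `⁅X, m⁆ = 0` for all `X`; pairing the structure equations with
test vectors on which `ω₁` takes the values `1` and `i` shows that this means `ω₁ m = 0`,
`ω₂ m + B ω̄₂ m = 0` and `c ω₂ m = 0`. The real-linear map `z ↦ z + B z̄` is injective unless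
`|B| = 1`, when its kernel is the real line through `i √B`; so the center has dimension `3`
exactly when `|B| = 1` and `c = 0`, and otherwise `2`. Finally `B = 1`, `c = 0` is excluded
by 3-step nilpotency: then `ω₂` is purely imaginary on brackets, all brackets are central, and
`g` is 2-step nilpotent.
-/

open Complex ComplexConjugate

namespace Complex

theorem forall_mul_sub_conj_mul_eq_zero_iff {u v : ℂ} :
    (∀ a : ℂ, a * u - conj a * v = 0) ↔ u = 0 ∧ v = 0 := by
  refine ⟨fun h => ?_, fun ⟨hu, hv⟩ a => by simp [hu, hv]⟩
  have h1 := h 1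
  have hI := h I
  simp only [one_mul, map_one, conj_I] at h1 hI
  have hsum : u + v = 0 := by linear_combination -I * hI + (u + v) * I_sq
  exact ⟨by linear_combination (h1 + hsum) / 2, by linear_combination (hsum - h1) / 2⟩

def idAddSmulConj (B : ℂ) : ℂ →ₗ[ℝ] ℂ := LinearMap.id + B • conjAe.toLinearMap

@[simp]
theorem idAddSmulConj_apply (B z : ℂ) : idAddSmulConj B z = z + B * conj z := rfl

theorem ker_idAddSmulConj_eq_bot {B : ℂ} (hB : ‖B‖ ≠ 1) :
    LinearMap.ker (idAddSmulConj B) = ⊥ := by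
  refine LinearMap.ker_eq_bot'.2 fun z hz => ?_
  rw [idAddSmulConj_apply] at hz
  have hz' : conj z + conj B * z = 0 := by simpa using congrArg conj hz
  have hnorm : (1 - ‖B‖ ^ 2 : ℂ) * z = 0 := by
    linear_combination hz - B * hz' + z * mul_conj' B
  have hne : (1 - ‖B‖ ^ 2 : ℂ) ≠ 0 := by
    norm_cast
    intro h
    apply hB
    nlinarith [norm_nonneg B]
  exact (mul_eq_zero.1 hnorm).resolve_left hne

theorem ker_idAddSmulConj_ne_top (B : ℂ) : LinearMap.ker (idAddSmulConj B) ≠ ⊤ := by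
  intro h
  have h1 := LinearMap.congr_fun (LinearMap.ker_eq_top.1 h) 1
  have hI := LinearMap.congr_fun (LinearMap.ker_eq_top.1 h) I
  simp only [idAddSmulConj_apply, map_one, mul_one, conj_I, LinearMap.zero_apply] at h1 hI
  have : (2 : ℂ) * I = 0 := by linear_combination I * h1 + hI
  simp at this

theorem finrank_ker_idAddSmulConj_eq_one_iff {B : ℂ} :
    Module.finrank ℝ (LinearMap.ker (idAddSmulConj B)) = 1 ↔ ‖B‖ = 1 := by
  refine ⟨fun h => ?_, fun hB => ?_⟩
  · by_contra hB
    rw [ker_idAddSmulConj_eq_bot hB, finrank_bot] at h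
    exact zero_ne_one h
  · obtain ⟨b, hb⟩ := IsAlgClosed.exists_pow_nat_eq B two_pos
    have hb1 : ‖b‖ = 1 := by
      rw [← pow_left_inj₀ (norm_nonneg b) zero_le_one two_ne_zero, ← norm_pow, hb, hB, one_pow]
    have hmem : I * b ∈ LinearMap.ker (idAddSmulConj B) := by
      rw [LinearMap.mem_ker, idAddSmulConj_apply, ← hb]
      have hbb : b * conj b = 1 := by rw [mul_conj', hb1]; simp
      simp only [map_mul, conj_I]
      linear_combination (-I * b) * hbb
    have hpos : 0 < Module.finrank ℝ (LinearMap.ker (idAddSmulConj B)) := by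
      rw [Nat.pos_iff_ne_zero, Ne, Submodule.finrank_eq_zero, ← Ne, Submodule.ne_bot_iff]
      exact ⟨I * b, hmem, mul_ne_zero I_ne_zero (norm_ne_zero_iff.1 (by simp [hb1]))⟩
    have hlt := Submodule.finrank_lt (ker_idAddSmulConj_ne_top B)
    rw [finrank_real_complex] at hlt
    omega

theorem finrank_ker_prod_smul_id_eq_one_iff {B : ℂ} {c : ℝ} :
    Module.finrank ℝ (LinearMap.ker ((idAddSmulConj B).prod (c • LinearMap.id))) = 1 ↔
      ‖B‖ = 1 ∧ c = 0 := by
  rw [LinearMap.ker_prod]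
  by_cases hc : c = 0
  · rw [hc, zero_smul, LinearMap.ker_zero, inf_top_eq, finrank_ker_idAddSmulConj_eq_one_iff]
    exact (and_iff_left rfl).symm
  · have hker : LinearMap.ker (c • LinearMap.id : ℂ →ₗ[ℝ] ℂ) = ⊥ :=
      LinearMap.ker_eq_bot'.2 fun z hz => by simpa [hc] using hz
    rw [hker, inf_bot_eq, finrank_bot]
    simp [hc]

end Complex

theorem Submodule.finrank_prod {K M N : Type*} [Field K] [AddCommGroup M] [Module K M]
    [AddCommGroup N] [Module K N] [FiniteDimensional K M] [FiniteDimensional K N]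
    (p : Submodule K M) (q : Submodule K N) :
    Module.finrank K (p.prod q) = Module.finrank K p + Module.finrank K q :=
  let e : p.prod q ≃ₗ[K] p × q :=
    { toFun x := (⟨x.1.1, x.2.1⟩, ⟨x.1.2, x.2.2⟩)
      invFun y := ⟨(y.1.1, y.2.1), ⟨y.1.2, y.2.2⟩⟩
      map_add' _ _ := rfl
      map_smul' _ _ := rfl
      left_inv _ := rfl
      right_inv _ := rfl }
  e.finrank_eq.trans Module.finrank_prod

theorem LieAlgebra.lowerCentralSeries_two_eq_bot_iff {R L : Type*} [CommRing R] [LieRing L]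
    [LieAlgebra R L] :
    LieModule.lowerCentralSeries R L L 2 = ⊥ ↔ ∀ x y : L, ⁅x, y⁆ ∈ center R L := by
  rw [LieModule.lowerCentralSeries_succ, ← LieModule.le_max_triv_iff_bracket_eq_bot,
    LieModule.lowerCentralSeries_succ, LieModule.lowerCentralSeries_zero, LieSubmodule.lie_le_iff]
  simp

/-- `d` is read through `dα(X, Y) = -α ⁅X, Y⁆`. -/
structure StructureEquations {g : Type*} [LieRing g] [LieAlgebra ℝ g] (ω₁ ω₂ ω₃ : g →ₗ[ℝ] ℂ)
    (B : ℂ) (c : ℝ) : Prop where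
  d_ω₁ : ∀ X Y : g, ω₁ ⁅X, Y⁆ = 0
  d_ω₂ : ∀ X Y : g, -ω₂ ⁅X, Y⁆ = ω₁ X * conj (ω₁ Y) - ω₁ Y * conj (ω₁ X)
  d_ω₃ : ∀ X Y : g, -ω₃ ⁅X, Y⁆ =
    (ω₁ X * ω₂ Y - ω₁ Y * ω₂ X) + B * (ω₁ X * conj (ω₂ Y) - ω₁ Y * conj (ω₂ X))
      + (c : ℂ) * (ω₂ X * conj (ω₁ Y) - ω₂ Y * conj (ω₁ X))

namespace StructureEquations

variable {g : Type*} [LieRing g] [LieAlgebra ℝ g] {ω₁ ω₂ ω₃ : g →ₗ[ℝ] ℂ} {B : ℂ} {c : ℝ}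

theorem mem_center_iff (h : StructureEquations ω₁ ω₂ ω₃ B c) (hω₁ : Function.Surjective ω₁)
    (hinj : Function.Injective (ω₁.prod (ω₂.prod ω₃))) (m : g) :
    m ∈ LieAlgebra.center ℝ g ↔
      ω₁ m = 0 ∧ ω₂ m + B * conj (ω₂ m) = 0 ∧ (c : ℂ) * ω₂ m = 0 := by
  have hbracket (x : g) : ⁅x, m⁆ = 0 ↔ ω₂ ⁅x, m⁆ = 0 ∧ ω₃ ⁅x, m⁆ = 0 := by
    rw [← map_eq_zero_iff _ hinj]
    simp [h.d_ω₁]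
  have hω₂ (x : g) : ω₂ ⁅x, m⁆ = 0 ↔ ω₁ x * conj (ω₁ m) - conj (ω₁ x) * ω₁ m = 0 := by
    rw [← neg_eq_zero, h.d_ω₂, mul_comm (ω₁ m)]
  have hω₃ (hm : ω₁ m = 0) (x : g) : ω₃ ⁅x, m⁆ = 0 ↔
      ω₁ x * (ω₂ m + B * conj (ω₂ m)) - conj (ω₁ x) * ((c : ℂ) * ω₂ m) = 0 := by
    rw [← neg_eq_zero, h.d_ω₃, hm, map_zero]
    ring_nf
  rw [LieModule.mem_maxTrivSubmodule]
  simp_rw [hbracket, forall_and, hω₂]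
  rw [← hω₁.forall (p := fun a => a * conj (ω₁ m) - conj a * ω₁ m = 0),
    forall_mul_sub_conj_mul_eq_zero_iff, map_eq_zero, and_self]
  refine and_congr_right fun hm => ?_
  simp_rw [hω₃ hm]
  rw [← hω₁.forall (p := fun a => a * _ - conj a * _ = 0), forall_mul_sub_conj_mul_eq_zero_iff]

theorem lowerCentralSeries_two_eq_bot (h : StructureEquations ω₁ ω₂ ω₃ 1 0)
    (hω₁ : Function.Surjective ω₁) (hinj : Function.Injective (ω₁.prod (ω₂.prod ω₃))) :
    LieModule.lowerCentralSeries ℝ g g 2 = ⊥ := by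
  refine LieAlgebra.lowerCentralSeries_two_eq_bot_iff.2 fun x y => ?_
  have hω₂ : ω₂ ⁅x, y⁆ = ω₁ y * conj (ω₁ x) - ω₁ x * conj (ω₁ y) := by
    linear_combination -h.d_ω₂ x y
  refine (h.mem_center_iff hω₁ hinj _).2 ⟨h.d_ω₁ x y, ?_, by simp⟩
  rw [hω₂]
  simp only [map_sub, map_mul, conj_conj]
  ring

theorem finrank_center (h : StructureEquations ω₁ ω₂ ω₃ B c)
    (hcoord : Function.Bijective (ω₁.prod (ω₂.prod ω₃))) :
    Module.finrank ℝ (LieAlgebra.center ℝ g) =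
      Module.finrank ℝ (LinearMap.ker ((idAddSmulConj B).prod (c • LinearMap.id))) + 2 := by
  set K := LinearMap.ker ((idAddSmulConj B).prod (c • LinearMap.id))
  set S : Submodule ℝ (ℂ × ℂ × ℂ) := (⊥ : Submodule ℝ ℂ).prod (K.prod ⊤)
  have hω₁ : Function.Surjective ω₁ := Prod.fst_surjective.comp hcoord.2
  have hcomap : (LieAlgebra.center ℝ g).toSubmodule = S.comap (ω₁.prod (ω₂.prod ω₃)) := by
    ext m
    simp [h.mem_center_iff hω₁ hcoord.1, S, K, Complex.real_smul]
  calc Module.finrank ℝ (LieAlgebra.center ℝ g)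
      = Module.finrank ℝ (S.comap (ω₁.prod (ω₂.prod ω₃))) := by
        rw [← hcomap]
        rfl
    _ = Module.finrank ℝ S :=
        (LinearEquiv.ofSubmodule' (LinearEquiv.ofBijective _ hcoord) _).finrank_eq
    _ = Module.finrank ℝ K + 2 := by
        rw [Submodule.finrank_prod, Submodule.finrank_prod, finrank_bot, finrank_top,
          finrank_real_complex, zero_add]

end StructureEquations

theorem stmt5_general (g : Type) [LieRing g] [LieAlgebra ℝ g]
    (ω₁ ω₂ ω₃ : g →ₗ[ℝ] ℂ)
    (hcoord : Function.Bijective (fun X : g => (ω₁ X, ω₂ X, ω₃ X)))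
    (B : ℂ) (c : ℝ)
    (hd1 : ∀ X Y : g, ω₁ ⁅X, Y⁆ = 0)
    (hd2 : ∀ X Y : g, -ω₂ ⁅X, Y⁆ =
      ω₁ X * (starRingEnd ℂ) (ω₁ Y) - ω₁ Y * (starRingEnd ℂ) (ω₁ X))
    (hd3 : ∀ X Y : g, -ω₃ ⁅X, Y⁆ =
      (ω₁ X * ω₂ Y - ω₁ Y * ω₂ X)
        + B * (ω₁ X * (starRingEnd ℂ) (ω₂ Y) - ω₁ Y * (starRingEnd ℂ) (ω₂ X))
        + (c : ℂ) * (ω₂ X * (starRingEnd ℂ) (ω₁ Y) - ω₂ Y * (starRingEnd ℂ) (ω₁ X)))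
    (h3step : LieModule.lowerCentralSeries ℝ g g 3 = ⊥ ∧
      LieModule.lowerCentralSeries ℝ g g 2 ≠ ⊥) :
    Module.finrank ℝ ↥(LieAlgebra.center ℝ g) = 3 ↔
      (‖B‖ = 1 ∧ B ≠ 1 ∧ c = 0) := by
  have hΦ : Function.Bijective (ω₁.prod (ω₂.prod ω₃)) := hcoord
  have h : StructureEquations ω₁ ω₂ ω₃ B c := ⟨hd1, hd2, hd3⟩
  rw [h.finrank_center hΦ, show ∀ n, n + 2 = 3 ↔ n = 1 by omega,
    finrank_ker_prod_smul_id_eq_one_iff]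
  constructor
  · rintro ⟨hB, rfl⟩
    refine ⟨hB, ?_, rfl⟩
    rintro rfl
    exact h3step.2 (h.lowerCentralSeries_two_eq_bot (Prod.fst_surjective.comp hΦ.2) hΦ.1)
  · rintro ⟨hB, -, hc⟩
    exact ⟨hB, hc⟩

/-- Proposition 2.16 (first part): for the 3-step nilpotent Lie algebra with
complex structure equations `dω¹ = 0`, `dω² = ω¹∧ω̄¹`,
`dω³ = ω¹∧ω² + B ω¹∧ω̄² + c ω²∧ω̄¹` (`B ∈ ℂ`, `c ≥ 0`), the center is
3-dimensional iff `|B| = 1`, `B ≠ 1` and `c = 0`. -/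
theorem stmt5 (g : Type) [LieRing g] [LieAlgebra ℝ g]
    (J : g →ₗ[ℝ] g) (hJ : ∀ X, J (J X) = -X)
    (ω₁ ω₂ ω₃ : g →ₗ[ℝ] ℂ)
    (h1 : ∀ X, ω₁ (J X) = Complex.I * ω₁ X)
    (h2 : ∀ X, ω₂ (J X) = Complex.I * ω₂ X)
    (h3 : ∀ X, ω₃ (J X) = Complex.I * ω₃ X)
    (hcoord : Function.Bijective (fun X : g => (ω₁ X, ω₂ X, ω₃ X)))
    (B : ℂ) (c : ℝ) (hc : 0 ≤ c)
    (hd1 : ∀ X Y : g, ω₁ ⁅X, Y⁆ = 0)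
    (hd2 : ∀ X Y : g, -ω₂ ⁅X, Y⁆ =
      ω₁ X * (starRingEnd ℂ) (ω₁ Y) - ω₁ Y * (starRingEnd ℂ) (ω₁ X))
    (hd3 : ∀ X Y : g, -ω₃ ⁅X, Y⁆ =
      (ω₁ X * ω₂ Y - ω₁ Y * ω₂ X)
        + B * (ω₁ X * (starRingEnd ℂ) (ω₂ Y) - ω₁ Y * (starRingEnd ℂ) (ω₂ X))
        + (c : ℂ) * (ω₂ X * (starRingEnd ℂ) (ω₁ Y) - ω₂ Y * (starRingEnd ℂ) (ω₁ X)))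
    (h3step : LieModule.lowerCentralSeries ℝ g g 3 = ⊥ ∧
      LieModule.lowerCentralSeries ℝ g g 2 ≠ ⊥) :
    Module.finrank ℝ ↥(LieAlgebra.center ℝ g) = 3 ↔
      (‖B‖ = 1 ∧ B ≠ 1 ∧ c = 0) :=
  stmt5_general g ω₁ ω₂ ω₃ hcoord B c hd1 hd2 hd3 h3step
end

section
/- Let g be the 6-dimensional nilpotent Lie algebra determined by a (1,0)-basis ω¹,ω²,ω³ with dω¹ = 0, dω² = ω¹∧conj(ω¹), dω³ = ω¹∧ω² + B·ω¹∧conj(ω²) + c·ω²∧conj(ω¹), B ∈ ℂ, c ≥ 0. Then dim [g,[g,g]] = 1 if c = |B−1| ≠ 0, and dim [g,[g,g]] = 2 if c ≠ |B−1|. -/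
/-!
Since `dω¹ = 0` and `dω² = ω¹ ∧ ω̄¹`, the derived algebra `[g, g]` lies in `{ω₁ = 0, Re ω₂ = 0}`,
and a bracket `⁅X, Y⁆` with `ω₁ Y = 0`, `ω₂ Y = t i` has `ω₁ = ω₂ = 0` and
`ω₃ = (1 - B) z + c z̄` for `z = -t i ω₁ X`. Hence `ω₃` identifies `g² = [g, [g, g]]` with the
image of the real-linear map `z ↦ (1 - B) z + c z̄` of `ℂ`, whose determinant is `|1 - B|² - c²`:
its rank is `2` when `c ≠ |B - 1|` and `1` when `c = |B - 1| ≠ 0`.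
-/

open Complex ComplexConjugate LieModule

def mulAddMulConj (a b : ℂ) : ℂ →ₗ[ℝ] ℂ where
  toFun z := a * z + b * conj z
  map_add' x y := by simp only [map_add]; ring
  map_smul' r x := by simp only [Complex.real_smul, map_mul, conj_ofReal, RingHom.id_apply]; ring

@[simp] lemma mulAddMulConj_apply (a b z : ℂ) : mulAddMulConj a b z = a * z + b * conj z := rfl

lemma det_mulAddMulConj (a b : ℂ) : LinearMap.det (mulAddMulConj a b) = normSq a - normSq b := by
  rw [← LinearMap.det_toMatrix basisOneI, Matrix.det_fin_two]
  simp only [LinearMap.toMatrix_apply, coe_basisOneI, coe_basisOneI_repr, mulAddMulConj_apply,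
    Matrix.cons_val_zero, Matrix.cons_val_one, Matrix.cons_val_fin_one, map_one, conj_I, add_re,
    add_im, mul_re, mul_im, I_re, I_im, one_re, one_im, neg_re, neg_im, normSq_apply]
  ring

lemma finrank_range_mulAddMulConj_of_norm_ne {a b : ℂ} (h : ‖a‖ ≠ ‖b‖) :
    Module.finrank ℝ (LinearMap.range (mulAddMulConj a b)) = 2 := by
  have hdet : LinearMap.det (mulAddMulConj a b) ≠ 0 := by
    rw [det_mulAddMulConj, sub_ne_zero, normSq_eq_norm_sq, normSq_eq_norm_sq]
    exact fun h' => h (by simpa using h')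
  have htop : LinearMap.range (mulAddMulConj a b) = ⊤ :=
    (LinearMap.isUnit_iff_range_eq_top _).mp
      ((LinearMap.isUnit_iff_isUnit_det _).mpr hdet.isUnit)
  rw [htop, finrank_top, finrank_real_complex]

lemma mulAddMulConj_ne_zero {a b : ℂ} (ha : a ≠ 0) : mulAddMulConj a b ≠ 0 := by
  intro h
  have h1 := LinearMap.congr_fun h 1
  have hI := LinearMap.congr_fun h I
  simp only [mulAddMulConj_apply, map_one, conj_I, LinearMap.zero_apply] at h1 hI
  exact ha (by linear_combination (h1 - I * hI) / 2 + (a - b) / 2 * I_sq)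

lemma finrank_range_mulAddMulConj_of_norm_eq {a b : ℂ} (h : ‖a‖ = ‖b‖) (ha : a ≠ 0) :
    Module.finrank ℝ (LinearMap.range (mulAddMulConj a b)) = 1 := by
  have hdet : LinearMap.det (mulAddMulConj a b) = 0 := by
    rw [det_mulAddMulConj, normSq_eq_norm_sq, normSq_eq_norm_sq, h, sub_self]
  have hlt : Module.finrank ℝ (LinearMap.range (mulAddMulConj a b)) < 2 := by
    rw [← finrank_real_complex]
    exact Submodule.finrank_lt (LinearMap.range_lt_top_of_det_eq_zero hdet).ne
  have hpos : Module.finrank ℝ (LinearMap.range (mulAddMulConj a b)) ≠ 0 := by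
    rw [Ne, Submodule.finrank_eq_zero, LinearMap.range_eq_bot]
    exact mulAddMulConj_ne_zero ha
  omega

section LowerCentralSeries

variable {R L M : Type*} [CommRing R] [LieRing L] [LieAlgebra R L] [AddCommGroup M] [Module R M]
  [LieRingModule L M]

lemma LieModule.lie_mem_lowerCentralSeries_succ (x : L) {m : M} {k : ℕ}
    (hm : m ∈ lowerCentralSeries R L M k) : ⁅x, m⁆ ∈ lowerCentralSeries R L M (k + 1) := by
  rw [LieModule.lowerCentralSeries_succ]
  exact LieSubmodule.lie_mem_lie (LieSubmodule.mem_top x) hm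

lemma LieModule.lowerCentralSeries_succ_le_of_forall_lie_mem [LieModule R L M] {k : ℕ}
    {S : Submodule R M} (h : ∀ (x : L), ∀ m ∈ lowerCentralSeries R L M k, ⁅x, m⁆ ∈ S) :
    (lowerCentralSeries R L M (k + 1) : Submodule R M) ≤ S := by
  rw [LieModule.lowerCentralSeries_succ, LieSubmodule.lieIdeal_oper_eq_linear_span',
    Submodule.span_le]
  rintro _ ⟨x, -, m, hm, rfl⟩
  exact h x m hm

end LowerCentralSeries

section StructureEquations

variable {g : Type*} [LieRing g] [LieAlgebra ℝ g]

/-- `dω(X, Y) = -ω ⁅X, Y⁆` and `(α ∧ β)(X, Y) = α X * β Y - α Y * β X`. -/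
structure HasStructureEquations (ω₁ ω₂ ω₃ : g →ₗ[ℝ] ℂ) (B : ℂ) (c : ℝ) : Prop where
  d_omega₁ : ∀ X Y : g, ω₁ ⁅X, Y⁆ = 0
  d_omega₂ : ∀ X Y : g, -ω₂ ⁅X, Y⁆ = ω₁ X * conj (ω₁ Y) - ω₁ Y * conj (ω₁ X)
  d_omega₃ : ∀ X Y : g, -ω₃ ⁅X, Y⁆ = (ω₁ X * ω₂ Y - ω₁ Y * ω₂ X)
    + B * (ω₁ X * conj (ω₂ Y) - ω₁ Y * conj (ω₂ X))
    + (c : ℂ) * (ω₂ X * conj (ω₁ Y) - ω₂ Y * conj (ω₁ X))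

namespace HasStructureEquations

variable {ω₁ ω₂ ω₃ : g →ₗ[ℝ] ℂ} {B : ℂ} {c : ℝ}

lemma omega_lie_of_omega₁_eq_zero (h : HasStructureEquations ω₁ ω₂ ω₃ B c) (x : g) {y : g}
    {t : ℝ} (hy₁ : ω₁ y = 0) (hy₂ : ω₂ y = t * I) :
    ω₁ ⁅x, y⁆ = 0 ∧ ω₂ ⁅x, y⁆ = 0 ∧ ω₃ ⁅x, y⁆ = mulAddMulConj (1 - B) c (-(t * I) * ω₁ x) := by
  have h₂ := h.d_omega₂ x y
  have h₃ := h.d_omega₃ x y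
  rw [hy₁, map_zero] at h₂ h₃
  rw [hy₂, map_mul, conj_ofReal, conj_I] at h₃
  refine ⟨h.d_omega₁ x y, by linear_combination -h₂, ?_⟩
  simp only [mulAddMulConj_apply, map_mul, map_neg, conj_ofReal, conj_I]
  linear_combination -h₃

lemma mem_lowerCentralSeries_one (h : HasStructureEquations ω₁ ω₂ ω₃ B c) {X : g}
    (hX : X ∈ lowerCentralSeries ℝ g g 1) : ω₁ X = 0 ∧ (ω₂ X).re = 0 := by
  suffices (lowerCentralSeries ℝ g g 1 : Submodule ℝ g) ≤
      LinearMap.ker ω₁ ⊓ LinearMap.ker (reLm ∘ₗ ω₂) by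
    simpa using this hX
  refine LieModule.lowerCentralSeries_succ_le_of_forall_lie_mem fun x y _ => ?_
  have h₂ := congrArg re (h.d_omega₂ x y)
  simp only [neg_re, sub_re, mul_re, conj_re, conj_im] at h₂
  simp only [Submodule.mem_inf, LinearMap.mem_ker, LinearMap.comp_apply, reLm_coe]
  exact ⟨h.d_omega₁ x y, by linarith⟩

lemma mem_lowerCentralSeries_two (h : HasStructureEquations ω₁ ω₂ ω₃ B c) {X : g}
    (hX : X ∈ lowerCentralSeries ℝ g g 2) :
    ω₁ X = 0 ∧ ω₂ X = 0 ∧ ω₃ X ∈ LinearMap.range (mulAddMulConj (1 - B) c) := by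
  suffices (lowerCentralSeries ℝ g g 2 : Submodule ℝ g) ≤ LinearMap.ker ω₁ ⊓ LinearMap.ker ω₂ ⊓
      (LinearMap.range (mulAddMulConj (1 - B) c)).comap ω₃ by
    simpa [and_assoc] using this hX
  refine LieModule.lowerCentralSeries_succ_le_of_forall_lie_mem fun x y hy => ?_
  obtain ⟨hy₁, hy₂⟩ := h.mem_lowerCentralSeries_one hy
  have hy₂' : ω₂ y = ((ω₂ y).im : ℂ) * I := by
    apply Complex.ext <;> simp [hy₂]
  obtain ⟨h₁, h₂, h₃⟩ := h.omega_lie_of_omega₁_eq_zero x hy₁ hy₂'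
  simp only [Submodule.mem_inf, LinearMap.mem_ker, Submodule.mem_comap, h₁, h₂, h₃]
  exact ⟨⟨trivial, trivial⟩, LinearMap.mem_range_self _ _⟩

lemma exists_mem_lowerCentralSeries_two (h : HasStructureEquations ω₁ ω₂ ω₃ B c)
    (hsurj : Function.Surjective ω₁) {v : ℂ}
    (hv : v ∈ LinearMap.range (mulAddMulConj (1 - B) c)) :
    ∃ X ∈ lowerCentralSeries ℝ g g 2, ω₃ X = v := by
  obtain ⟨z, rfl⟩ := hv
  obtain ⟨P, hP⟩ := hsurj 1
  obtain ⟨Q, hQ⟩ := hsurj I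
  obtain ⟨R, hR⟩ := hsurj (z * I / 2)
  have hY₂ : ω₂ ⁅P, Q⁆ = ((2 : ℝ) : ℂ) * I := by
    have h₂ := h.d_omega₂ P Q
    rw [hP, hQ, map_one, conj_I] at h₂
    push_cast
    linear_combination -h₂
  have hY : ⁅P, Q⁆ ∈ lowerCentralSeries ℝ g g 1 :=
    lie_mem_lowerCentralSeries_succ P (by simp)
  refine ⟨⁅R, ⁅P, Q⁆⁆, lie_mem_lowerCentralSeries_succ R hY, ?_⟩
  rw [(h.omega_lie_of_omega₁_eq_zero R (h.d_omega₁ P Q) hY₂).2.2, hR]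
  congr 1
  push_cast
  linear_combination (-z) * I_sq

lemma finrank_lowerCentralSeries_two (h : HasStructureEquations ω₁ ω₂ ω₃ B c)
    (hcoord : Function.Bijective fun X : g => (ω₁ X, ω₂ X, ω₃ X)) :
    Module.finrank ℝ (lowerCentralSeries ℝ g g 2) =
      Module.finrank ℝ (LinearMap.range (mulAddMulConj (1 - B) c)) := by
  let f := ω₃ ∘ₗ (LieSubmodule.toSubmodule (lowerCentralSeries ℝ g g 2)).subtype
  have hf : Function.Injective f := by
    rintro ⟨x, hx⟩ ⟨y, hy⟩ hxy
    obtain ⟨hx₁, hx₂, -⟩ := h.mem_lowerCentralSeries_two hx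
    obtain ⟨hy₁, hy₂, -⟩ := h.mem_lowerCentralSeries_two hy
    exact Subtype.ext (hcoord.injective (Prod.ext (hx₁.trans hy₁.symm)
      (Prod.ext (hx₂.trans hy₂.symm) hxy)))
  have hrange : LinearMap.range f = LinearMap.range (mulAddMulConj (1 - B) c) := by
    refine le_antisymm ?_ fun v hv => ?_
    · rintro _ ⟨⟨x, hx⟩, rfl⟩
      exact (h.mem_lowerCentralSeries_two hx).2.2
    · obtain ⟨X, hX, rfl⟩ := h.exists_mem_lowerCentralSeries_two
        (Prod.fst_surjective.comp hcoord.surjective) hv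
      exact ⟨⟨X, hX⟩, rfl⟩
  rw [← hrange, LinearMap.finrank_range_of_inj hf]
  rfl

end HasStructureEquations

end StructureEquations

theorem stmt6_general (g : Type) [LieRing g] [LieAlgebra ℝ g]
    (ω₁ ω₂ ω₃ : g →ₗ[ℝ] ℂ)
    (hcoord : Function.Bijective (fun X : g => (ω₁ X, ω₂ X, ω₃ X)))
    (B : ℂ) (c : ℝ) (hc : 0 ≤ c)
    (hd1 : ∀ X Y : g, ω₁ ⁅X, Y⁆ = 0)
    (hd2 : ∀ X Y : g, -ω₂ ⁅X, Y⁆ =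
      ω₁ X * (starRingEnd ℂ) (ω₁ Y) - ω₁ Y * (starRingEnd ℂ) (ω₁ X))
    (hd3 : ∀ X Y : g, -ω₃ ⁅X, Y⁆ =
      (ω₁ X * ω₂ Y - ω₁ Y * ω₂ X)
        + B * (ω₁ X * (starRingEnd ℂ) (ω₂ Y) - ω₁ Y * (starRingEnd ℂ) (ω₂ X))
        + (c : ℂ) * (ω₂ X * (starRingEnd ℂ) (ω₁ Y) - ω₂ Y * (starRingEnd ℂ) (ω₁ X))) :
    (c = ‖B - 1‖ ∧ c ≠ 0 →
      Module.finrank ℝ ↥(LieModule.lowerCentralSeries ℝ g g 2) = 1) ∧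
    (c ≠ ‖B - 1‖ →
      Module.finrank ℝ ↥(LieModule.lowerCentralSeries ℝ g g 2) = 2) := by
  have h : HasStructureEquations ω₁ ω₂ ω₃ B c := ⟨hd1, hd2, hd3⟩
  have hnorm_c : ‖(c : ℂ)‖ = c := Complex.norm_of_nonneg hc
  rw [h.finrank_lowerCentralSeries_two hcoord]
  refine ⟨fun ⟨hcB, hc₀⟩ => ?_, fun hcB => ?_⟩
  · refine finrank_range_mulAddMulConj_of_norm_eq (by rw [norm_sub_rev, hnorm_c, hcB]) ?_
    intro hB
    exact hc₀ (by rw [hcB, norm_sub_rev, hB, norm_zero])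
  · exact finrank_range_mulAddMulConj_of_norm_ne
      (by rw [norm_sub_rev, hnorm_c]; exact Ne.symm hcB)

/-- Lemma 2.17: for the Lie algebra with complex structure equations
`dω¹ = 0`, `dω² = ω¹∧ω̄¹`, `dω³ = ω¹∧ω² + B ω¹∧ω̄² + c ω²∧ω̄¹`, the second
commutator `g² = [g,[g,g]]` has dimension `1` if `c = |B-1| ≠ 0` and
dimension `2` if `c ≠ |B-1|`. -/
theorem stmt6 (g : Type) [LieRing g] [LieAlgebra ℝ g]
    (J : g →ₗ[ℝ] g) (hJ : ∀ X, J (J X) = -X)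
    (ω₁ ω₂ ω₃ : g →ₗ[ℝ] ℂ)
    (h1 : ∀ X, ω₁ (J X) = Complex.I * ω₁ X)
    (h2 : ∀ X, ω₂ (J X) = Complex.I * ω₂ X)
    (h3 : ∀ X, ω₃ (J X) = Complex.I * ω₃ X)
    (hcoord : Function.Bijective (fun X : g => (ω₁ X, ω₂ X, ω₃ X)))
    (B : ℂ) (c : ℝ) (hc : 0 ≤ c)
    (hd1 : ∀ X Y : g, ω₁ ⁅X, Y⁆ = 0)
    (hd2 : ∀ X Y : g, -ω₂ ⁅X, Y⁆ =
      ω₁ X * (starRingEnd ℂ) (ω₁ Y) - ω₁ Y * (starRingEnd ℂ) (ω₁ X))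
    (hd3 : ∀ X Y : g, -ω₃ ⁅X, Y⁆ =
      (ω₁ X * ω₂ Y - ω₁ Y * ω₂ X)
        + B * (ω₁ X * (starRingEnd ℂ) (ω₂ Y) - ω₁ Y * (starRingEnd ℂ) (ω₂ X))
        + (c : ℂ) * (ω₂ X * (starRingEnd ℂ) (ω₁ Y) - ω₂ Y * (starRingEnd ℂ) (ω₁ X))) :
    (c = ‖B - 1‖ ∧ c ≠ 0 →
      Module.finrank ℝ ↥(LieModule.lowerCentralSeries ℝ g g 2) = 1) ∧
    (c ≠ ‖B - 1‖ →
      Module.finrank ℝ ↥(LieModule.lowerCentralSeries ℝ g g 2) = 2) :=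
  stmt6_general g ω₁ ω₂ ω₃ hcoord B c hc hd1 hd2 hd3
end

section
/- Let g be a real Lie algebra and J, J' two complex structures on g (endomorphisms squaring to −Id and satisfying the Nijenhuis integrability condition [JX,JY] = J[JX,Y] + J[X,JY] + [X,Y]). Then J and J' are equivalent (i.e. there is a Lie algebra automorphism F of g with J = F⁻¹ ∘ J' ∘ F) if and only if there is a ℂ-linear isomorphism F*: g*_J^{1,0} → g*_{J'}^{1,0} between the spaces of (1,0)-forms that commutes with the Chevalley–Eilenberg differential d (extended to the complexified exterior algebra). -/
/-!
Every real linear form `φ` on `g` is the real part of the `(1,0)`-form `X ↦ φ X - i φ (J X)`,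
so `(1,0)`-forms separate the points of `g`. Hence the two conditions on `f` say exactly that
`f ∘ J' = J ∘ f` and that `f` is a Lie algebra automorphism, and `F = f⁻¹` is an equivalence
from `J` to `J'` (and conversely).
-/

open Complex

section OneZeroForms

variable {g : Type*} [AddCommGroup g] [Module ℝ g]

theorem exists_oneZeroForm_re_eq (J : g →ₗ[ℝ] g) (hJ2 : ∀ X, J (J X) = -X)
    (φ : Module.Dual ℝ g) :
    ∃ α : g →ₗ[ℝ] ℂ, (∀ X, α (J X) = I * α X) ∧ ∀ X, (α X).re = φ X := by
  let α : g →ₗ[ℝ] ℂ := ofRealCLM.toLinearMap ∘ₗ φ - I • (ofRealCLM.toLinearMap ∘ₗ φ ∘ₗ J)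
  have hα : ∀ X, α X = φ X - I * φ (J X) := fun X => by simp [α]
  refine ⟨α, fun X => ?_, fun X => by simp [hα]⟩
  rw [hα, hα, hJ2, map_neg, ofReal_neg]
  linear_combination (φ (J X) : ℂ) * I_sq

theorem eq_of_forall_oneZeroForm_apply_eq (J : g →ₗ[ℝ] g) (hJ2 : ∀ X, J (J X) = -X) {v w : g}
    (h : ∀ α : g →ₗ[ℝ] ℂ, (∀ X, α (J X) = I * α X) → α v = α w) : v = w := by
  rw [← sub_eq_zero, ← Module.forall_dual_apply_eq_zero_iff ℝ]
  intro φ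
  obtain ⟨α, hα, hre⟩ := exists_oneZeroForm_re_eq J hJ2 φ
  rw [← hre, map_sub, h α hα, sub_self, zero_re]

end OneZeroForms

theorem LinearEquiv.symm_apply_lie {R L L' : Type*} [CommRing R] [LieRing L] [LieAlgebra R L]
    [LieRing L'] [LieAlgebra R L'] {F : L ≃ₗ[R] L'} (hF : ∀ X Y, F ⁅X, Y⁆ = ⁅F X, F Y⁆)
    (X Y : L') : F.symm ⁅X, Y⁆ = ⁅F.symm X, F.symm Y⁆ :=
  F.injective (by rw [hF, F.apply_symm_apply, F.apply_symm_apply, F.apply_symm_apply])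

theorem stmt10_general (g : Type) [LieRing g] [LieAlgebra ℝ g]
    (J J' : g →ₗ[ℝ] g)
    (hJ2 : ∀ X, J (J X) = -X) :
    (∃ F : g ≃ₗ[ℝ] g, (∀ X Y, F ⁅X, Y⁆ = ⁅F X, F Y⁆) ∧
        ∀ X, J X = F.symm (J' (F X))) ↔
    (∃ f : g ≃ₗ[ℝ] g,
      (∀ α : g →ₗ[ℝ] ℂ, (∀ X, α (J X) = Complex.I * α X) →
        ∀ X, α (f (J' X)) = Complex.I * α (f X)) ∧
      (∀ α : g →ₗ[ℝ] ℂ, (∀ X, α (J X) = Complex.I * α X) →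
        ∀ X Y, α (f ⁅X, Y⁆) = α ⁅f X, f Y⁆)) := by
  constructor
  · rintro ⟨F, hFlie, hFJ⟩
    refine ⟨F.symm, fun α hα X => ?_, fun α _ X Y => by rw [F.symm_apply_lie hFlie]⟩
    rw [← hα, hFJ, F.apply_symm_apply]
  · rintro ⟨f, hfJ, hflie⟩
    have hfJ' : ∀ X, f (J' X) = J (f X) := fun X =>
      eq_of_forall_oneZeroForm_apply_eq J hJ2 fun α hα => by rw [hfJ α hα, hα]
    have hflie' : ∀ X Y, f ⁅X, Y⁆ = ⁅f X, f Y⁆ := fun X Y =>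
      eq_of_forall_oneZeroForm_apply_eq J hJ2 fun α hα => hflie α hα X Y
    refine ⟨f.symm, f.symm_apply_lie hflie', fun X => ?_⟩
    rw [LinearEquiv.symm_symm, hfJ', f.apply_symm_apply]

/-- Two complex structures `J, J'` on a real Lie algebra `g` are equivalent
(conjugate by a Lie algebra automorphism) iff there is a `ℂ`-linear
isomorphism of the spaces of `(1,0)`-forms commuting with the
Chevalley–Eilenberg differential.  The latter is encoded via the underlying
invertible map `f : g → g`: its transpose `α ↦ α ∘ f` sends `(1,0)`-forms for
`J` to `(1,0)`-forms for `J'`, and commutation with `d` (on `(1,0)`-forms,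
`dα(X,Y) = -α⁅X,Y⁆`, the extension to the exterior algebra being the
transpose of `f` on 2-forms) reads `α(f⁅X,Y⁆) = α⁅fX, fY⁆`. -/
theorem stmt10 (g : Type) [LieRing g] [LieAlgebra ℝ g] [FiniteDimensional ℝ g]
    (J J' : g →ₗ[ℝ] g)
    (hJ2 : ∀ X, J (J X) = -X) (hJ'2 : ∀ X, J' (J' X) = -X)
    (hJint : ∀ X Y, ⁅J X, J Y⁆ = J ⁅J X, Y⁆ + J ⁅X, J Y⁆ + ⁅X, Y⁆)
    (hJ'int : ∀ X Y, ⁅J' X, J' Y⁆ = J' ⁅J' X, Y⁆ + J' ⁅X, J' Y⁆ + ⁅X, Y⁆) :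
    (∃ F : g ≃ₗ[ℝ] g, (∀ X Y, F ⁅X, Y⁆ = ⁅F X, F Y⁆) ∧
        ∀ X, J X = F.symm (J' (F X))) ↔
    (∃ f : g ≃ₗ[ℝ] g,
      (∀ α : g →ₗ[ℝ] ℂ, (∀ X, α (J X) = Complex.I * α X) →
        ∀ X, α (f (J' X)) = Complex.I * α (f X)) ∧
      (∀ α : g →ₗ[ℝ] ℂ, (∀ X, α (J X) = Complex.I * α X) →
        ∀ X Y, α (f ⁅X, Y⁆) = α ⁅f X, f Y⁆)) :=
  stmt10_general g J J' hJ2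
end

section
/- Let λ ≥ 0, and let (6) be the system over ℂ in unknowns a,b,c,e,f (with e ≠ 0): e = af−bc, e = |a|² + t·a·conj(c) + E|c|², λe = a·conj(b) + t·a·conj(f) + E·c·conj(f), 0 = conj(a)·b + t·b·conj(c) + E·conj(c)·f, 0 = |b|² + t·b·conj(f) + E|f|², where t ≥ 0 and E ∈ ℂ. If this system has a solution with e ≠ 0, then t = λ and E = 0. -/
/-!
Conjugating `e = af - bc` and combining it with the last two equations gives `b · conj e = 0`,
so `b = 0`. Then `e = af` forces `a, f ≠ 0`, the last equation reduces to `E |f|² = 0`, and the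
third to `λ f = t · conj f`; comparing absolute values gives `λ = t`.
-/

open ComplexConjugate

theorem Complex.mul_conj_det_eq_zero {a b c f t E : ℂ}
    (h₁ : conj a * b + t * b * conj c + E * conj c * f = 0)
    (h₂ : (Complex.normSq b : ℂ) + t * b * conj f + E * Complex.normSq f = 0) :
    b * conj (a * f - b * c) = 0 := by
  rw [← Complex.mul_conj, ← Complex.mul_conj] at h₂
  simp only [map_sub, map_mul]
  linear_combination conj f * h₁ - conj c * h₂

theorem Complex.eq_of_mul_eq_mul_conj {lam t : ℝ} (hlam : 0 ≤ lam) (ht : 0 ≤ t) {z : ℂ}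
    (hz : z ≠ 0) (h : (lam : ℂ) * z = t * conj z) : t = lam := by
  have hnorm := congrArg (‖·‖) h
  simp only [norm_mul, Complex.norm_real, Complex.norm_conj, Real.norm_of_nonneg hlam,
    Real.norm_of_nonneg ht] at hnorm
  exact (mul_right_cancel₀ (norm_ne_zero_iff.mpr hz) hnorm).symm

/-- Lemma 2.5(i): the triple `(1,λ,0)` is equivalent only to itself among
triples `(1,t,E)`; the system (6) (with `D = 0` in equation (V)) encodes the
existence of a Lie algebra automorphism intertwining the complex structures. -/
theorem stmt12 (lam t : ℝ) (hlam : 0 ≤ lam) (ht : 0 ≤ t) (E : ℂ)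
    (h : ∃ a b c e f : ℂ, e ≠ 0 ∧
      e = a * f - b * c ∧
      e = (Complex.normSq a : ℂ) + (t : ℂ) * a * (starRingEnd ℂ) c +
        E * (Complex.normSq c : ℂ) ∧
      (lam : ℂ) * e = a * (starRingEnd ℂ) b + (t : ℂ) * a * (starRingEnd ℂ) f +
        E * c * (starRingEnd ℂ) f ∧
      0 = (starRingEnd ℂ) a * b + (t : ℂ) * b * (starRingEnd ℂ) c +
        E * (starRingEnd ℂ) c * f ∧
      0 = (Complex.normSq b : ℂ) + (t : ℂ) * b * (starRingEnd ℂ) f +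
        E * (Complex.normSq f : ℂ)) :
    t = lam ∧ E = 0 := by
  obtain ⟨a, b, c, e, f, he, hdet, -, hlin, hcross, hquad⟩ := h
  have hb : b = 0 := by
    have := Complex.mul_conj_det_eq_zero hcross.symm hquad.symm
    rwa [← hdet, mul_eq_zero, map_eq_zero, or_iff_left he] at this
  subst hb
  simp only [zero_mul, sub_zero] at hdet
  obtain ⟨ha, hf⟩ : a ≠ 0 ∧ f ≠ 0 := mul_ne_zero_iff.mp (hdet ▸ he)
  have hE : E = 0 := by
    simpa [hf] using hquad.symm
  subst hE
  refine ⟨Complex.eq_of_mul_eq_mul_conj hlam ht hf (mul_left_cancel₀ ha ?_), rfl⟩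
  rw [hdet, map_zero] at hlin
  linear_combination hlin
end

section
/- Let λ ≥ 0, t ≥ 0, D = x+iy ≠ 0 with λ ≠ t and 4y² − (t²−λ²)(4x+t²−λ²) ≥ 0. Set β = 2y + √(4y² − (t²−λ²)(4x+t²−λ²)) and suppose λ² ≠ t². Then for any real e₂ ≠ 0 the complex number e = e₂·(β/(λ²−t²) + i), written as e = e₁+ie₂, satisfies the quadratic relation e₁²(t²−λ²) + 4y·e₁e₂ + e₂²(t²−λ²+4x) = 0, and moreover De/conj(e) = D·((β²−(λ²−t²)²)/(β²+(λ²−t²)²) + i·2β(λ²−t²)/(β²+(λ²−t²)²)). -/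
/-- The explicit computation in Lemma 2.8 / Corollary 2.9: with
`β = 2y + √(4y² - (t²-λ²)(4x+t²-λ²))` and `e = e₂(β/(λ²-t²) + i)`, the first
equation of system (9) holds, and `De/ē` is given by the displayed formula. -/
theorem stmt14 (lam t x y : ℝ) (hlam : 0 ≤ lam) (ht : 0 ≤ t) (hne : lam ≠ t)
    (D : ℂ) (hDre : D.re = x) (hDim : D.im = y) (hD0 : D ≠ 0)
    (hdisc : 4 * y ^ 2 - (t ^ 2 - lam ^ 2) * (4 * x + t ^ 2 - lam ^ 2) ≥ 0)
    (β : ℝ)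
    (hβ : β = 2 * y +
      Real.sqrt (4 * y ^ 2 - (t ^ 2 - lam ^ 2) * (4 * x + t ^ 2 - lam ^ 2)))
    (hsq : lam ^ 2 ≠ t ^ 2)
    (e₂ : ℝ) (he₂ : e₂ ≠ 0) (e : ℂ)
    (he : e = (((e₂ * β / (lam ^ 2 - t ^ 2) : ℝ)) : ℂ) + (e₂ : ℂ) * Complex.I) :
    e.re ^ 2 * (t ^ 2 - lam ^ 2) + 4 * y * e.re * e.im +
        e.im ^ 2 * (t ^ 2 - lam ^ 2 + 4 * x) = 0 ∧
    D * e / (starRingEnd ℂ) e =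
      D * ((((β ^ 2 - (lam ^ 2 - t ^ 2) ^ 2) / (β ^ 2 + (lam ^ 2 - t ^ 2) ^ 2) : ℝ) : ℂ) +
        (((2 * β * (lam ^ 2 - t ^ 2)) / (β ^ 2 + (lam ^ 2 - t ^ 2) ^ 2) : ℝ) : ℂ) *
          Complex.I) := by
  have hd : lam ^ 2 - t ^ 2 ≠ 0 := sub_ne_zero.mpr hsq
  have hs := Real.sq_sqrt hdisc
  have hβrel : β ^ 2 = 4 * y * β - (t ^ 2 - lam ^ 2) * (4 * x + t ^ 2 - lam ^ 2) := by
    nlinarith [hs, Real.sqrt_nonneg (4 * y ^ 2 - (t ^ 2 - lam ^ 2) * (4 * x + t ^ 2 - lam ^ 2))]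
  have hden : β ^ 2 + (lam ^ 2 - t ^ 2) ^ 2 ≠ 0 := by positivity
  constructor
  · have hre : e.re = e₂ * β / (lam ^ 2 - t ^ 2) := by
      rw [he]
      simp only [Complex.add_re, Complex.ofReal_re, Complex.mul_re, Complex.I_re,
        Complex.I_im, Complex.ofReal_im, mul_zero, mul_one, zero_mul, sub_zero,
        add_zero, zero_sub, neg_zero]
    have him : e.im = e₂ := by
      rw [he]
      simp only [Complex.add_im, Complex.ofReal_im, Complex.mul_im, Complex.I_re,
        Complex.I_im, Complex.ofReal_re, mul_zero, mul_one, zero_mul, zero_add,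
        add_zero]
    rw [hre, him]
    field_simp
    linear_combination (-e₂ ^ 2 * (lam ^ 2 - t ^ 2)) * hβrel
  · have him : e.im = e₂ := by
      rw [he]
      simp only [Complex.add_im, Complex.ofReal_im, Complex.mul_im, Complex.I_re,
        Complex.I_im, Complex.ofReal_re, mul_zero, mul_one, zero_mul, zero_add,
        add_zero]
    have he0 : e ≠ 0 := fun h => he₂ (by rw [← him, h]; simp)
    have hc : (starRingEnd ℂ) e ≠ 0 := by simpa [map_eq_zero] using he0
    have hdC : ((lam : ℂ) ^ 2 - (t : ℂ) ^ 2) ≠ 0 := by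
      have := Complex.ofReal_ne_zero.mpr hd
      push_cast at this
      exact this
    have hdenC : ((β : ℂ) ^ 2 + ((lam : ℂ) ^ 2 - (t : ℂ) ^ 2) ^ 2) ≠ 0 := by
      have := Complex.ofReal_ne_zero.mpr hden
      push_cast at this
      exact this
    rw [div_eq_iff hc, mul_assoc]
    congr 1
    rw [he, map_add, map_mul, Complex.conj_ofReal, Complex.conj_ofReal, Complex.conj_I]
    rw [Complex.ext_iff]
    constructor <;>
    · simp only [Complex.add_re, Complex.add_im, Complex.mul_re, Complex.mul_im,
        Complex.sub_re, Complex.sub_im, Complex.ofReal_re, Complex.ofReal_im,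
        Complex.I_re, Complex.I_im, mul_zero, mul_one, zero_mul, sub_zero, add_zero,
        zero_add, zero_sub, neg_zero, Complex.neg_re, Complex.neg_im]
      field_simp
      ring
end

section
/- Let g be the real 6-dimensional Lie algebra with dual basis e¹,…,e⁶ satisfying de¹=de²=de³=0, de⁴=e¹∧e², de⁵=e¹∧e⁴, de⁶=e²∧e⁴ (the algebra h₁₆ = (0,0,0,12,14,24)). Suppose B ∈ ℂ with |B| = 1 and B ≠ 1, and let h be the Lie algebra determined by a (1,0)-basis ω¹,ω²,ω³ with dω¹ = 0, dω² = ω¹∧conj(ω¹), dω³ = ω¹∧ω² + B·ω¹∧conj(ω²). Then h is isomorphic to g. -/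
/-!
The coordinates `X ↦ (ω¹ X, ω² X, ω³ X)` identify `g` with `ℂ³` and turn the structure
equations into an explicit bracket on `ℂ³`, so it suffices to find a real basis of `ℂ³`
satisfying the `h₁₆` relations for that bracket. Take `v₀ = (1,0,0)`,
`v₁ = (i,0,0)`, `v₂ = (0,1-B,0)` and `v₃ = -[v₀,v₁]`, `v₄ = -[v₀,v₃]`, `v₅ = -[v₁,v₃]`.
The only relations that are not immediate are `[v₀,v₂] = [v₁,v₂] = 0`, which hold because
`(1-B) + B·conj(1-B) = 1 - |B|² = 0`. Linear independence needs `Re B ≠ 1`, which is where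
`B ≠ 1` enters.
-/

/-- `g ≅ h₁₆ = (0,0,0,12,14,24)`: there is a basis realizing the structure
constants of `h₁₆` (`[e₁,e₂] = -e₄`, `[e₁,e₄] = -e₅`, `[e₂,e₄] = -e₆`,
other brackets zero). -/
def IsH16 (g : Type) [LieRing g] [LieAlgebra ℝ g] : Prop :=
  ∃ b : Module.Basis (Fin 6) ℝ g, ⁅b 0, b 1⁆ = -b 3 ∧ ⁅b 0, b 3⁆ = -b 4 ∧
    ⁅b 1, b 3⁆ = -b 5 ∧
    ⁅b 0, b 2⁆ = 0 ∧ ⁅b 0, b 4⁆ = 0 ∧ ⁅b 0, b 5⁆ = 0 ∧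
    ⁅b 1, b 2⁆ = 0 ∧ ⁅b 1, b 4⁆ = 0 ∧ ⁅b 1, b 5⁆ = 0 ∧
    ⁅b 2, b 3⁆ = 0 ∧ ⁅b 2, b 4⁆ = 0 ∧ ⁅b 2, b 5⁆ = 0 ∧
    ⁅b 3, b 4⁆ = 0 ∧ ⁅b 3, b 5⁆ = 0 ∧ ⁅b 4, b 5⁆ = 0

open Complex ComplexConjugate ComplexOrder

def IsH16Frame {V : Type*} [Neg V] [Zero V] (β : V → V → V) (b : Fin 6 → V) : Prop :=
  β (b 0) (b 1) = -b 3 ∧ β (b 0) (b 3) = -b 4 ∧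
    β (b 1) (b 3) = -b 5 ∧
    β (b 0) (b 2) = 0 ∧ β (b 0) (b 4) = 0 ∧ β (b 0) (b 5) = 0 ∧
    β (b 1) (b 2) = 0 ∧ β (b 1) (b 4) = 0 ∧ β (b 1) (b 5) = 0 ∧
    β (b 2) (b 3) = 0 ∧ β (b 2) (b 4) = 0 ∧ β (b 2) (b 5) = 0 ∧
    β (b 3) (b 4) = 0 ∧ β (b 3) (b 5) = 0 ∧ β (b 4) (b 5) = 0

theorem IsH16Frame.map {V W : Type*} [AddGroup V] [AddGroup W] {β : V → V → V}
    {β' : W → W → W} {b : Fin 6 → V} (h : IsH16Frame β b) (f : V →+ W)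
    (hf : ∀ x y, β' (f x) (f y) = f (β x y)) : IsH16Frame β' (f ∘ b) := by
  obtain ⟨h01, h03, h13, h02, h04, h05, h12, h14, h15, h23, h24, h25, h34, h35, h45⟩ := h
  simp only [IsH16Frame, Function.comp_apply, hf, h01, h03, h13, h02, h04, h05, h12, h14, h15,
    h23, h24, h25, h34, h35, h45, map_neg, map_zero, and_self]

theorem isH16_of_linearEquiv {g : Type} {V : Type*} [LieRing g] [LieAlgebra ℝ g]
    [AddCommGroup V] [Module ℝ V] (E : g ≃ₗ[ℝ] V) {β : V → V → V}
    (hE : ∀ X Y, E ⁅X, Y⁆ = β (E X) (E Y)) (b : Module.Basis (Fin 6) ℝ V)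
    (hb : IsH16Frame β b) : IsH16 g := by
  refine ⟨b.map E.symm, hb.map E.symm.toLinearMap.toAddMonoidHom fun x y => E.injective ?_⟩
  simp [hE]

/-- The bracket in the coordinates `(ω¹, ω², ω³)`, read off from the structure equations. -/
def coordBracket (B : ℂ) (p q : ℂ × ℂ × ℂ) : ℂ × ℂ × ℂ :=
  (0, -(p.1 * conj q.1 - q.1 * conj p.1),
    -((p.1 * q.2.1 - q.1 * p.2.1) + B * (p.1 * conj q.2.1 - q.1 * conj p.2.1)))

def h16Frame (B : ℂ) : Fin 6 → ℂ × ℂ × ℂ :=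
  ![(1, 0, 0), (I, 0, 0), (0, 1 - B, 0), (0, -2 * I, 0), (0, 0, 2 * I * (B - 1)),
    (0, 0, 2 * (1 - B))]

theorem isH16Frame_coordBracket {B : ℂ} (hB : ‖B‖ = 1) :
    IsH16Frame (coordBracket B) (h16Frame B) := by
  have hBB : B * conj B = 1 := by rw [mul_conj, normSq_eq_norm_sq, hB]; norm_num
  simp only [IsH16Frame, coordBracket, h16Frame, Matrix.cons_val, Prod.neg_mk, Prod.ext_iff,
    map_zero, mul_zero, zero_mul, sub_self, neg_zero, add_zero, Prod.fst_zero, Prod.snd_zero,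
    true_and, and_true, map_one, map_sub, map_mul, map_neg, map_ofNat, conj_I]
  exact ⟨by ring, by ring, by linear_combination (2 - 2 * B) * I_sq, by linear_combination hBB,
    by linear_combination I * hBB⟩

theorem re_ne_one_of_norm_eq_one {B : ℂ} (hB : ‖B‖ = 1) (hB1 : B ≠ 1) : B.re ≠ 1 := by
  intro h
  have hB0 : 0 ≤ B := re_eq_norm.mp (by rw [h, hB])
  exact hB1 (by rw [← re_add_im B, ← (nonneg_iff.mp hB0).2, h]; simp)

theorem linearIndependent_h16Frame {B : ℂ} (hB : B.re ≠ 1) :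
    LinearIndependent ℝ (h16Frame B) := by
  rw [Fintype.linearIndependent_iff]
  intro c hc
  simp only [Fin.sum_univ_six, h16Frame, Matrix.cons_val, Prod.smul_mk, smul_zero,
    Prod.mk_add_mk, add_zero, zero_add, Prod.ext_iff, Prod.fst_zero, Prod.snd_zero,
    real_smul] at hc
  obtain ⟨e01, e23, e45⟩ := hc
  have hB' : 1 - B ≠ 0 := sub_ne_zero.mpr fun h => hB (h ▸ one_re)
  have e45' : (c 5 - c 4 * I) * (2 * (1 - B)) = 0 := by linear_combination e45
  replace e45 := (mul_eq_zero.mp e45').resolve_right (mul_ne_zero two_ne_zero hB')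
  have h2 : c 2 = 0 := by simpa [sub_eq_zero, Ne.symm hB] using congrArg re e23
  intro i
  fin_cases i
  · simpa using congrArg re e01
  · simpa using congrArg im e01
  · exact h2
  · simpa [h2] using congrArg im e23
  · simpa using congrArg im e45
  · simpa using congrArg re e45

noncomputable def h16Basis {B : ℂ} (hB : B.re ≠ 1) : Module.Basis (Fin 6) ℝ (ℂ × ℂ × ℂ) :=
  basisOfLinearIndependentOfCardEqFinrank (linearIndependent_h16Frame hB)
    (by simp [Module.finrank_prod])

theorem coe_h16Basis {B : ℂ} (hB : B.re ≠ 1) : ⇑(h16Basis hB) = h16Frame B :=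
  coe_basisOfLinearIndependentOfCardEqFinrank _ _

theorem stmt15_general (g : Type) [LieRing g] [LieAlgebra ℝ g]
    (ω₁ ω₂ ω₃ : g →ₗ[ℝ] ℂ)
    (hcoord : Function.Bijective (fun X : g => (ω₁ X, ω₂ X, ω₃ X)))
    (B : ℂ) (hB : ‖B‖ = 1) (hB1 : B ≠ 1)
    (hd1 : ∀ X Y : g, ω₁ ⁅X, Y⁆ = 0)
    (hd2 : ∀ X Y : g, -ω₂ ⁅X, Y⁆ =
      ω₁ X * (starRingEnd ℂ) (ω₁ Y) - ω₁ Y * (starRingEnd ℂ) (ω₁ X))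
    (hd3 : ∀ X Y : g, -ω₃ ⁅X, Y⁆ =
      (ω₁ X * ω₂ Y - ω₁ Y * ω₂ X)
        + B * (ω₁ X * (starRingEnd ℂ) (ω₂ Y) - ω₁ Y * (starRingEnd ℂ) (ω₂ X))) :
    IsH16 g := by
  let E : g ≃ₗ[ℝ] ℂ × ℂ × ℂ := .ofBijective (ω₁.prod (ω₂.prod ω₃)) hcoord
  have hE : ∀ X Y, E ⁅X, Y⁆ = coordBracket B (E X) (E Y) := fun X Y => by
    have hEX : ∀ Z, E Z = (ω₁ Z, ω₂ Z, ω₃ Z) := fun _ => rfl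
    rw [hEX, hEX, hEX, coordBracket, hd1]
    congr 2
    · linear_combination -hd2 X Y
    · linear_combination -hd3 X Y
  have hre := re_ne_one_of_norm_eq_one hB hB1
  exact isH16_of_linearEquiv E hE (h16Basis hre)
    (coe_h16Basis hre ▸ isH16Frame_coordBracket hB)

/-- Proposition 2.16 (second part): the Lie algebra determined by
`dω¹ = 0`, `dω² = ω¹∧ω̄¹`, `dω³ = ω¹∧ω² + B ω¹∧ω̄²` with `|B| = 1`, `B ≠ 1`
is isomorphic to `h₁₆`. -/
theorem stmt15 (g : Type) [LieRing g] [LieAlgebra ℝ g]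
    (J : g →ₗ[ℝ] g) (hJ : ∀ X, J (J X) = -X)
    (ω₁ ω₂ ω₃ : g →ₗ[ℝ] ℂ)
    (h1 : ∀ X, ω₁ (J X) = Complex.I * ω₁ X)
    (h2 : ∀ X, ω₂ (J X) = Complex.I * ω₂ X)
    (h3 : ∀ X, ω₃ (J X) = Complex.I * ω₃ X)
    (hcoord : Function.Bijective (fun X : g => (ω₁ X, ω₂ X, ω₃ X)))
    (B : ℂ) (hB : ‖B‖ = 1) (hB1 : B ≠ 1)
    (hd1 : ∀ X Y : g, ω₁ ⁅X, Y⁆ = 0)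
    (hd2 : ∀ X Y : g, -ω₂ ⁅X, Y⁆ =
      ω₁ X * (starRingEnd ℂ) (ω₁ Y) - ω₁ Y * (starRingEnd ℂ) (ω₁ X))
    (hd3 : ∀ X Y : g, -ω₃ ⁅X, Y⁆ =
      (ω₁ X * ω₂ Y - ω₁ Y * ω₂ X)
        + B * (ω₁ X * (starRingEnd ℂ) (ω₂ Y) - ω₁ Y * (starRingEnd ℂ) (ω₂ X))) :
    IsH16 g :=
  stmt15_general g ω₁ ω₂ ω₃ hcoord B hB hB1 hd1 hd2 hd3
end

section
/- Let B ∈ ℂ, c ∈ ℝ≥0 with c = |B−1| ≠ 0. Then the three coefficients 1−|B|²−c²+2c·Re B, 4c·Im B, and 1−|B|²−c²−2c·Re B all vanish simultaneously if and only if B = 0 (and then c = 1). -/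
theorem stmt16_general (B : ℂ) (c : ℝ)
    (hcB : c = ‖B - 1‖) (hc0 : c ≠ 0) :
    (1 - ‖B‖ ^ 2 - c ^ 2 + 2 * c * B.re = 0 ∧
      4 * c * B.im = 0 ∧
      1 - ‖B‖ ^ 2 - c ^ 2 - 2 * c * B.re = 0) ↔
    (B = 0 ∧ c = 1) := by
  constructor
  · rintro ⟨h_plus, h_im, h_minus⟩
    -- the first and third coefficients differ by `4 c Re B`
    have hre : B.re = 0 := by
      have : c * B.re = 0 := by linarith
      simpa [hc0] using this
    have him : B.im = 0 := by simpa [hc0] using h_im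
    have hB : B = 0 := Complex.ext hre him
    exact ⟨hB, by simp [hcB, hB]⟩
  · rintro ⟨rfl, rfl⟩
    norm_num

/-- Proposition 2.18(i) (coefficient computation): for `c = |B-1| ≠ 0`, the
three coefficients of the quadratic form (15) vanish simultaneously iff
`B = 0` (and then `c = 1`). -/
theorem stmt16 (B : ℂ) (c : ℝ) (hc : 0 ≤ c)
    (hcB : c = ‖B - 1‖) (hc0 : c ≠ 0) :
    (1 - ‖B‖ ^ 2 - c ^ 2 + 2 * c * B.re = 0 ∧
      4 * c * B.im = 0 ∧
      1 - ‖B‖ ^ 2 - c ^ 2 - 2 * c * B.re = 0) ↔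
    (B = 0 ∧ c = 1) :=
  stmt16_general B c hcB hc0
end

section
/- Consider the 6-dimensional real Lie algebra determined by a (1,0)-basis μ¹,μ²,μ³ with dμ¹ = dμ² = 0 and 2(1−|a|²)dμ³ = 2·conj(a)·μ¹∧μ² + i·μ¹∧conj(μ¹) + μ¹∧conj(μ²) + μ²∧conj(μ¹) − i|a|²·μ²∧conj(μ²), for a ∈ ℂ with 0 < |a| < 1. Then the (1,1)-form 2Ω = i r² μ¹∧conj(μ¹) + i|a|²r² μ²∧conj(μ²) + i t² μ³∧conj(μ³) (for any r,t > 0) satisfies d(Ω∧Ω) = 0, i.e. Ω defines a balanced Hermitian structure. -/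
/-- The inclusion `Fin m → Fin (m+2)` skipping the two indices `i, j`. -/
def skip2 {m : ℕ} (i j : Fin (m + 2)) (l : Fin m) : Fin (m + 2) :=
  if (l : ℕ) < min (i : ℕ) (j : ℕ) then ⟨l, by have := l.isLt; omega⟩
  else if (l : ℕ) + 1 < max (i : ℕ) (j : ℕ) then ⟨l + 1, by have := l.isLt; omega⟩
  else ⟨l + 2, by have := l.isLt; omega⟩

/-- The Chevalley–Eilenberg differential of a complex-valued `(m+1)`-form on a
Lie algebra `g`:
`(dσ)(X₀,…,X_{m+1}) = ∑_{i<j} (-1)^{i+j} σ(⁅Xᵢ,Xⱼ⁆, X₀,…,X̂ᵢ,…,X̂ⱼ,…)`. -/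
noncomputable def ceD {g : Type} [LieRing g] {m : ℕ} (σ : (Fin (m + 1) → g) → ℂ) :
    (Fin (m + 2) → g) → ℂ := fun X =>
  ∑ i : Fin (m + 2), ∑ j : Fin (m + 2),
    if (i : ℕ) < (j : ℕ) then
      (-1 : ℂ) ^ ((i : ℕ) + (j : ℕ)) *
        σ (Fin.cons ⁅X i, X j⁆ fun l => X (skip2 i j l))
    else 0

/-!
Since `d` is a derivation of degree one, `d(Ω ∧ Ω) = 2 Ω ∧ dΩ`. As `dμ¹ = dμ² = 0`, only `dμ³`
enters `dΩ = (i t²/2)(dμ³ ∧ μ̄³ - μ³ ∧ dμ̄³)`, and in `Ω ∧ dΩ` the only surviving products pair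
the `μ¹ ∧ μ̄¹` (resp. `μ² ∧ μ̄²`) component of `Ω` with the `μ² ∧ μ̄²` (resp. `μ¹ ∧ μ̄¹`) component
of `dμ³`. Their sum is proportional to `s² - |a|² r²`, where `s²` is the coefficient of
`i μ² ∧ μ̄²` in `2Ω`; here `s² = |a|² r²`, so `Ω ∧ dΩ = 0` for every `r` and `t`.
-/

open ComplexConjugate

theorem Fin.cons_eq_vec_two {α : Type*} (a : α) (f : Fin 1 → α) :
    (Fin.cons a f : Fin 2 → α) = ![a, f 0] := by
  ext k; fin_cases k <;> rfl

theorem Fin.cons_eq_vec_four {α : Type*} (a : α) (f : Fin 3 → α) :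
    (Fin.cons a f : Fin 4 → α) = ![a, f 0, f 1, f 2] := by
  ext k; fin_cases k <;> rfl

section ChevalleyEilenberg

variable {g : Type} [LieRing g]

theorem ceD_apply_three (σ : (Fin 2 → g) → ℂ) (X : Fin 3 → g) :
    ceD σ X = -σ ![⁅X 0, X 1⁆, X 2] + σ ![⁅X 0, X 2⁆, X 1] - σ ![⁅X 1, X 2⁆, X 0] := by
  simp only [ceD, Nat.reduceAdd, Fin.val_fin_lt, skip2, Fin.val_eq_zero, lt_inf_iff,
    Fin.val_pos_iff, Fin.isValue, Fin.zero_eta, zero_add, lt_sup_iff, Fin.mk_one, Fin.reduceFinMk,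
    Fin.cons_eq_vec_two, Nat.succ_eq_add_one, Fin.sum_univ_three, not_lt_zero, ↓reduceIte,
    Fin.lt_one_iff, Fin.coe_ofNat_eq_mod, Nat.one_mod, zero_lt_one, and_true, lt_self_iff_false,
    or_false, Nat.mod_succ, Fin.reduceLT, Order.lt_two_iff, Std.le_refl, or_true, Nat.zero_mod,
    pow_one, neg_mul, one_mul, even_two, Even.neg_pow, one_pow, one_ne_zero, Fin.reduceEq, add_zero]
  ring

theorem ceD_apply_five (σ : (Fin 4 → g) → ℂ) (X : Fin 5 → g) :
    ceD σ X =
      -σ ![⁅X 0, X 1⁆, X 2, X 3, X 4] + σ ![⁅X 0, X 2⁆, X 1, X 3, X 4]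
      - σ ![⁅X 0, X 3⁆, X 1, X 2, X 4] + σ ![⁅X 0, X 4⁆, X 1, X 2, X 3]
      - σ ![⁅X 1, X 2⁆, X 0, X 3, X 4] + σ ![⁅X 1, X 3⁆, X 0, X 2, X 4]
      - σ ![⁅X 1, X 4⁆, X 0, X 2, X 3] - σ ![⁅X 2, X 3⁆, X 0, X 1, X 4]
      + σ ![⁅X 2, X 4⁆, X 0, X 1, X 3] - σ ![⁅X 3, X 4⁆, X 0, X 1, X 2] := by
  simp only [ceD, Nat.reduceAdd, Fin.val_fin_lt, skip2, lt_inf_iff, lt_sup_iff,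
    Fin.cons_eq_vec_four, Nat.succ_eq_add_one, Fin.isValue, Fin.coe_ofNat_eq_mod, Nat.zero_mod,
    Fin.val_pos_iff, Fin.zero_eta, zero_add, Fin.mk_one, Fin.reduceFinMk, Nat.one_mod, Nat.mod_succ,
    Fin.sum_univ_five, not_lt_zero, ↓reduceIte, Fin.lt_one_iff, zero_lt_one, and_true,
    lt_self_iff_false, or_false, and_false, Nat.not_ofNat_lt_one, Nat.reduceMod, Fin.reduceLT,
    Order.lt_two_iff, Std.le_refl, or_true, Nat.not_ofNat_le_one, Nat.one_lt_ofNat, Nat.lt_add_one,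
    Nat.reduceLT, pow_one, neg_mul, one_mul, even_two, Even.neg_pow, one_pow, one_ne_zero,
    Fin.reduceEq, add_zero]
  ring

/-- `Ω ∧ Ω` in the determinant normalisation of `∧`, the one matching `ceD`. -/
def wedgeSelf (Ω : g → g → ℂ) (Y : Fin 4 → g) : ℂ :=
  2 * (Ω (Y 0) (Y 1) * Ω (Y 2) (Y 3) - Ω (Y 0) (Y 2) * Ω (Y 1) (Y 3)
    + Ω (Y 0) (Y 3) * Ω (Y 1) (Y 2))

def wedgeTwoThree (α : g → g → ℂ) (β : (Fin 3 → g) → ℂ) (X : Fin 5 → g) : ℂ :=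
  α (X 0) (X 1) * β ![X 2, X 3, X 4] - α (X 0) (X 2) * β ![X 1, X 3, X 4]
    + α (X 0) (X 3) * β ![X 1, X 2, X 4] - α (X 0) (X 4) * β ![X 1, X 2, X 3]
    + α (X 1) (X 2) * β ![X 0, X 3, X 4] - α (X 1) (X 3) * β ![X 0, X 2, X 4]
    + α (X 1) (X 4) * β ![X 0, X 2, X 3] + α (X 2) (X 3) * β ![X 0, X 1, X 4]
    - α (X 2) (X 4) * β ![X 0, X 1, X 3] + α (X 3) (X 4) * β ![X 0, X 1, X 2]

theorem ceD_wedgeSelf (Ω : g → g → ℂ) (X : Fin 5 → g) :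
    ceD (wedgeSelf Ω) X = 2 * wedgeTwoThree Ω (ceD fun Y => Ω (Y 0) (Y 1)) X := by
  simp only [ceD_apply_five, ceD_apply_three, wedgeSelf, wedgeTwoThree, Fin.isValue,
    Matrix.cons_val_zero, Matrix.cons_val_one, Matrix.cons_val, Matrix.cons_val_fin_one]
  ring

end ChevalleyEilenberg

noncomputable section LinearForms

variable {g : Type} [LieRing g] [LieAlgebra ℝ g]

def wedge (α β : g →ₗ[ℝ] ℂ) (X Y : g) : ℂ := α X * β Y - α Y * β X

def wedgeConj (α β : g →ₗ[ℝ] ℂ) (X Y : g) : ℂ := α X * conj (β Y) - α Y * conj (β X)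

theorem wedgeTwoThree_ceD_eq_zero (μ₁ μ₂ μ₃ : g →ₗ[ℝ] ℂ) (a : ℂ) (ha1 : ‖a‖ < 1)
    (hd1 : ∀ X Y : g, μ₁ ⁅X, Y⁆ = 0) (hd2 : ∀ X Y : g, μ₂ ⁅X, Y⁆ = 0)
    (hd3 : ∀ X Y : g, ((2 * (1 - ‖a‖ ^ 2) : ℝ) : ℂ) * (-μ₃ ⁅X, Y⁆) =
      2 * conj a * wedge μ₁ μ₂ X Y + Complex.I * wedgeConj μ₁ μ₁ X Y + wedgeConj μ₁ μ₂ X Y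
        + wedgeConj μ₂ μ₁ X Y - Complex.I * ((‖a‖ ^ 2 : ℝ) : ℂ) * wedgeConj μ₂ μ₂ X Y)
    (p T : ℝ) (Ω : g → g → ℂ)
    (hΩ : ∀ X Y : g, Ω X Y = Complex.I * p / 2 * wedgeConj μ₁ μ₁ X Y
      + Complex.I * ((‖a‖ ^ 2 * p : ℝ) : ℂ) / 2 * wedgeConj μ₂ μ₂ X Y
      + Complex.I * T / 2 * wedgeConj μ₃ μ₃ X Y)
    (X : Fin 5 → g) :
    wedgeTwoThree Ω (ceD fun Y => Ω (Y 0) (Y 1)) X = 0 := by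
  have hD : ((2 * (1 - ‖a‖ ^ 2) : ℝ) : ℂ) ≠ 0 := by
    have := pow_lt_one₀ (norm_nonneg a) ha1 two_ne_zero
    exact_mod_cast (by linarith : 2 * (1 - ‖a‖ ^ 2) ≠ 0)
  have hμ₃ := fun X Y => neg_eq_iff_eq_neg.mp ((eq_inv_mul_iff_mul_eq₀ hD).mpr (hd3 X Y))
  simp only [wedgeTwoThree, ceD_apply_three, Matrix.cons_val_zero, Matrix.cons_val_one,
    Matrix.cons_val, Matrix.cons_val_fin_one]
  simp only [hΩ, wedgeConj, hd1, hd2, map_zero]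
  simp only [hμ₃]
  simp only [wedge, wedgeConj, map_neg, map_mul, map_add, map_sub, map_inv₀, map_ofNat,
    Complex.conj_conj, Complex.conj_I, Complex.conj_ofReal]
  push_cast
  ring

end LinearForms

theorem stmt17_general (g : Type) [LieRing g] [LieAlgebra ℝ g]
    (μ₁ μ₂ μ₃ : g →ₗ[ℝ] ℂ)
    (a : ℂ) (ha1 : ‖a‖ < 1)
    (hd1 : ∀ X Y : g, μ₁ ⁅X, Y⁆ = 0)
    (hd2 : ∀ X Y : g, μ₂ ⁅X, Y⁆ = 0)
    (hd3 : ∀ X Y : g, ((2 * (1 - ‖a‖ ^ 2) : ℝ) : ℂ) * (-μ₃ ⁅X, Y⁆) =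
      2 * (starRingEnd ℂ) a * (μ₁ X * μ₂ Y - μ₁ Y * μ₂ X)
        + Complex.I * (μ₁ X * (starRingEnd ℂ) (μ₁ Y) - μ₁ Y * (starRingEnd ℂ) (μ₁ X))
        + (μ₁ X * (starRingEnd ℂ) (μ₂ Y) - μ₁ Y * (starRingEnd ℂ) (μ₂ X))
        + (μ₂ X * (starRingEnd ℂ) (μ₁ Y) - μ₂ Y * (starRingEnd ℂ) (μ₁ X))
        - Complex.I * ((‖a‖ ^ 2 : ℝ) : ℂ) *
            (μ₂ X * (starRingEnd ℂ) (μ₂ Y) - μ₂ Y * (starRingEnd ℂ) (μ₂ X)))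
    (r t : ℝ)
    (Ω : g → g → ℂ)
    (hΩ : ∀ X Y : g, Ω X Y =
      (Complex.I * (r ^ 2 : ℝ) / 2) *
          (μ₁ X * (starRingEnd ℂ) (μ₁ Y) - μ₁ Y * (starRingEnd ℂ) (μ₁ X))
        + (Complex.I * ((‖a‖ ^ 2 * r ^ 2 : ℝ) : ℂ) / 2) *
          (μ₂ X * (starRingEnd ℂ) (μ₂ Y) - μ₂ Y * (starRingEnd ℂ) (μ₂ X))
        + (Complex.I * (t ^ 2 : ℝ) / 2) *
          (μ₃ X * (starRingEnd ℂ) (μ₃ Y) - μ₃ Y * (starRingEnd ℂ) (μ₃ X))) :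
    ∀ X : Fin 5 → g,
      ceD (fun Y : Fin 4 → g =>
        2 * (Ω (Y 0) (Y 1) * Ω (Y 2) (Y 3) - Ω (Y 0) (Y 2) * Ω (Y 1) (Y 3)
          + Ω (Y 0) (Y 3) * Ω (Y 1) (Y 2))) X = 0 := by
  intro X
  have hΩdΩ := wedgeTwoThree_ceD_eq_zero μ₁ μ₂ μ₃ a ha1 hd1 hd2 hd3 (r ^ 2) (t ^ 2) Ω hΩ X
  calc ceD (wedgeSelf Ω) X = 2 * wedgeTwoThree Ω (ceD fun Y => Ω (Y 0) (Y 1)) X :=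
        ceD_wedgeSelf Ω X
    _ = 0 := by rw [hΩdΩ, mul_zero]

/-- Remark 5.10 / Theorem 5.9: along the deformation `Jₐ` (`0 < |a| < 1`) of
the abelian complex structure on `h₄`, given by `dμ¹ = dμ² = 0` and
`2(1-|a|²)dμ³ = 2ā μ¹∧μ² + i μ¹∧μ̄¹ + μ¹∧μ̄² + μ²∧μ̄¹ - i|a|² μ²∧μ̄²`, the
`(1,1)`-form `2Ω = i r² μ¹∧μ̄¹ + i|a|²r² μ²∧μ̄² + i t² μ³∧μ̄³` satisfies
`d(Ω∧Ω) = 0`, i.e. it is balanced. -/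
theorem stmt17 (g : Type) [LieRing g] [LieAlgebra ℝ g]
    (J : g →ₗ[ℝ] g) (hJ : ∀ X, J (J X) = -X)
    (μ₁ μ₂ μ₃ : g →ₗ[ℝ] ℂ)
    (h1 : ∀ X, μ₁ (J X) = Complex.I * μ₁ X)
    (h2 : ∀ X, μ₂ (J X) = Complex.I * μ₂ X)
    (h3 : ∀ X, μ₃ (J X) = Complex.I * μ₃ X)
    (hcoord : Function.Bijective (fun X : g => (μ₁ X, μ₂ X, μ₃ X)))
    (a : ℂ) (ha0 : 0 < ‖a‖) (ha1 : ‖a‖ < 1)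
    (hd1 : ∀ X Y : g, μ₁ ⁅X, Y⁆ = 0)
    (hd2 : ∀ X Y : g, μ₂ ⁅X, Y⁆ = 0)
    (hd3 : ∀ X Y : g, ((2 * (1 - ‖a‖ ^ 2) : ℝ) : ℂ) * (-μ₃ ⁅X, Y⁆) =
      2 * (starRingEnd ℂ) a * (μ₁ X * μ₂ Y - μ₁ Y * μ₂ X)
        + Complex.I * (μ₁ X * (starRingEnd ℂ) (μ₁ Y) - μ₁ Y * (starRingEnd ℂ) (μ₁ X))
        + (μ₁ X * (starRingEnd ℂ) (μ₂ Y) - μ₁ Y * (starRingEnd ℂ) (μ₂ X))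
        + (μ₂ X * (starRingEnd ℂ) (μ₁ Y) - μ₂ Y * (starRingEnd ℂ) (μ₁ X))
        - Complex.I * ((‖a‖ ^ 2 : ℝ) : ℂ) *
            (μ₂ X * (starRingEnd ℂ) (μ₂ Y) - μ₂ Y * (starRingEnd ℂ) (μ₂ X)))
    (r t : ℝ) (hr : 0 < r) (ht : 0 < t)
    (Ω : g → g → ℂ)
    (hΩ : ∀ X Y : g, Ω X Y =
      (Complex.I * (r ^ 2 : ℝ) / 2) *
          (μ₁ X * (starRingEnd ℂ) (μ₁ Y) - μ₁ Y * (starRingEnd ℂ) (μ₁ X))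
        + (Complex.I * ((‖a‖ ^ 2 * r ^ 2 : ℝ) : ℂ) / 2) *
          (μ₂ X * (starRingEnd ℂ) (μ₂ Y) - μ₂ Y * (starRingEnd ℂ) (μ₂ X))
        + (Complex.I * (t ^ 2 : ℝ) / 2) *
          (μ₃ X * (starRingEnd ℂ) (μ₃ Y) - μ₃ Y * (starRingEnd ℂ) (μ₃ X))) :
    ∀ X : Fin 5 → g,
      ceD (fun Y : Fin 4 → g =>
        2 * (Ω (Y 0) (Y 1) * Ω (Y 2) (Y 3) - Ω (Y 0) (Y 2) * Ω (Y 1) (Y 3)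
          + Ω (Y 0) (Y 3) * Ω (Y 1) (Y 2))) X = 0 :=
  stmt17_general g μ₁ μ₂ μ₃ a ha1 hd1 hd2 hd3 r t Ω hΩ
end

section
/- Let λ ≥ 0, t ≥ 0, D = x+iy with D ≠ 0, λ = t, and suppose e, f ∈ ℂ∖{0} satisfy E = De/conj(e) ≠ conj(D) and ((|f|²/e) − 1)(conj(D)conj(e) − De)² = λ²(conj(f) − f)(conj(D)conj(e)f − De·conj(f)). Then e is real, and consequently E = D. -/
open ComplexConjugate

/-!
Write `w = De`. Conjugating the equation, the right-hand side is fixed, and so is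
`(conj w - w)²`, because `conj w - w` is purely imaginary. Since `E ≠ conj D` means
`conj w ≠ w`, the factor `(conj w - w)²` cancels and `|f|²/e = |f|²/conj e`; thus `e` is real.
-/

namespace Complex

lemma conj_sq_conj_sub_self (w : ℂ) : conj ((conj w - w) ^ 2) = (conj w - w) ^ 2 := by
  simp only [map_pow, map_sub, conj_conj]
  ring

lemma conj_eq_of_conj_div_sub_one_mul_eq {c : ℝ} (hc : c ≠ 0) {e w : ℂ} (hw : conj w = w)
    (hw0 : w ≠ 0) (h : conj ((c / e - 1) * w) = (c / e - 1) * w) : conj e = e := by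
  simp only [map_mul, map_sub, map_div₀, conj_ofReal, map_one, hw] at h
  have hdiv : (c : ℂ) / conj e = c / e := by
    linear_combination mul_right_cancel₀ hw0 h
  simpa [div_eq_mul_inv, ofReal_ne_zero.mpr hc] using hdiv

lemma conj_eq_of_div_sub_one_mul_sq_eq {c r : ℝ} (hc : c ≠ 0) {e f w : ℂ} (hw : conj w ≠ w)
    (h : (c / e - 1) * (conj w - w) ^ 2 = r ^ 2 * (conj f - f) * (conj w * f - w * conj f)) :
    conj e = e := by
  have hrhs : conj ((r : ℂ) ^ 2 * (conj f - f) * (conj w * f - w * conj f)) =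
      r ^ 2 * (conj f - f) * (conj w * f - w * conj f) := by
    simp only [map_mul, map_sub, map_pow, conj_conj, conj_ofReal]
    ring
  refine conj_eq_of_conj_div_sub_one_mul_eq hc (conj_sq_conj_sub_self w)
    (pow_ne_zero 2 (sub_ne_zero.mpr hw)) ?_
  rw [h, hrhs]

lemma conj_mul_ne_self_of_mul_div_conj_ne {D e : ℂ} (he : e ≠ 0)
    (h : D * e / conj e ≠ conj D) : conj (D * e) ≠ D * e := by
  contrapose! h
  rw [map_mul] at h
  rw [← h, mul_div_cancel_right₀ _ ((map_ne_zero _).mpr he)]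

end Complex

open Complex in
theorem stmt18_general (lam : ℝ) (D : ℂ)
    (e f : ℂ) (he : e ≠ 0) (hf : f ≠ 0)
    (E : ℂ) (hE : E = D * e / (starRingEnd ℂ) e) (hEne : E ≠ (starRingEnd ℂ) D)
    (heq : ((Complex.normSq f : ℂ) / e - 1) *
        ((starRingEnd ℂ) D * (starRingEnd ℂ) e - D * e) ^ 2 =
      ((lam : ℂ)) ^ 2 * ((starRingEnd ℂ) f - f) *
        ((starRingEnd ℂ) D * (starRingEnd ℂ) e * f - D * e * (starRingEnd ℂ) f)) :
    e.im = 0 ∧ E = D := by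
  rw [← map_mul] at heq
  have hee : conj e = e := conj_eq_of_div_sub_one_mul_sq_eq (normSq_pos.mpr hf).ne'
    (conj_mul_ne_self_of_mul_div_conj_ne he (hE ▸ hEne)) heq
  exact ⟨conj_eq_iff_im.mp hee, by rw [hE, hee, mul_div_cancel_right₀ _ he]⟩

/-- The forward direction of Corollary 2.7 specialized to `λ = t`: the
equivalence equation forces `e` to be real, and consequently `E = D`. -/
theorem stmt18 (lam : ℝ) (hlam : 0 ≤ lam) (D : ℂ) (hD0 : D ≠ 0)
    (e f : ℂ) (he : e ≠ 0) (hf : f ≠ 0)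
    (E : ℂ) (hE : E = D * e / (starRingEnd ℂ) e) (hEne : E ≠ (starRingEnd ℂ) D)
    (heq : ((Complex.normSq f : ℂ) / e - 1) *
        ((starRingEnd ℂ) D * (starRingEnd ℂ) e - D * e) ^ 2 =
      ((lam : ℂ)) ^ 2 * ((starRingEnd ℂ) f - f) *
        ((starRingEnd ℂ) D * (starRingEnd ℂ) e * f - D * e * (starRingEnd ℂ) f)) :
    e.im = 0 ∧ E = D :=
  stmt18_general lam D e f he hf E hE hEne heq
end
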